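/- arXiv:1112.5876 — 8 statements merged into one kernel-verified Lean document; each statement's English description precedes it below -/
import Mathlib

section
/- A vector p = (p_S)_{∅ ≠ S ⊆ {1,...,n}} ∈ ℝ^{2^n − 1} lies in the complete probability polytope CP_n (the convex hull of the 2^n vectors u_ε = (∏_{i∈S} ε_i)_{∅ ≠ S ⊆ {1,...,n}}, ε ∈ {0,1}^n) if and only if for every ε ∈ {0,1}^n, the quantity h(ε) := Σ_{T ⊇ supp(ε)} (−1)^{|T| − |supp(ε)|} p_T is nonnegative, where supp(ε) = { i : ε_i = 1 } and p_∅ := 1. -/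
/-!
The numbers `h(ε)` are the Möbius inversion of `T ↦ p_T` (with `p_∅ = 1`) on the Boolean lattice,
read off at `supp ε`. Möbius inversion gives `p = ∑_ε h(ε) u_ε` together with `∑_ε h(ε) = p_∅ = 1`,
so nonnegative `h(ε)` exhibit `p` as a convex combination of the vertices. Conversely each `h(ε)` is
an affine function of `p` taking the value `[ε = δ]` at the vertex `u_δ`, so it is nonnegative on
the convex hull.
-/

/-- The vertex of the complete probability polytope `CP_n` associated with
`ε ∈ {0,1}^n`: the coordinate indexed by a nonempty `S ⊆ {1,…,n}` is `∏_{i ∈ S} ε_i`. -/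
noncomputable def cpVertex (n : ℕ) (ε : Fin n → Bool) :
    {S : Finset (Fin n) // S.Nonempty} → ℝ :=
  fun S => ∏ i ∈ S.1, (if ε i then (1 : ℝ) else 0)

/-- The inclusion–exclusion functional `h(ε)(p) = ∑_{T ⊇ supp ε} (−1)^{|T|−|supp ε|} p_T`,
with the convention `p_∅ = 1`. -/
noncomputable def hFun (n : ℕ) (ε : Fin n → Bool)
    (p : {S : Finset (Fin n) // S.Nonempty} → ℝ) : ℝ :=
  ∑ T : Finset (Fin n),
    if (Finset.univ.filter (fun i => ε i = true)) ⊆ T then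
      (-1 : ℝ) ^ (T.card - (Finset.univ.filter (fun i => ε i = true)).card) *
        (if h : T.Nonempty then p ⟨T, h⟩ else 1)
    else 0

open Finset

theorem neg_one_pow_sub_of_le {R : Type*} [Ring R] {m n : ℕ} (h : n ≤ m) :
    (-1 : R) ^ (m - n) = (-1) ^ m * (-1) ^ n := by
  rw [← pow_sub_mul_pow (-1 : R) h, mul_assoc, ← pow_add, ← two_mul, pow_mul, neg_one_sq,
    one_pow, mul_one]

namespace Finset

variable {α R : Type*} [DecidableEq α] [Ring R]

theorem sum_Icc_neg_one_pow_card (s t : Finset α) :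
    ∑ u ∈ Icc s t, (-1 : R) ^ #u = if s = t then (-1) ^ #s else 0 := by
  by_cases hst : s ⊆ t
  · have hinj : Set.InjOn (s ∪ ·) ((t \ s).powerset : Set (Finset α)) := by
      intro u hu v hv huv
      have hu : Disjoint s u := disjoint_sdiff.mono_right (mem_powerset.1 hu)
      have hv : Disjoint s v := disjoint_sdiff.mono_right (mem_powerset.1 hv)
      rw [← union_sdiff_cancel_left hu, ← union_sdiff_cancel_left hv]
      exact congrArg (· \ s) huv
    rw [Icc_eq_image_powerset hst, sum_image hinj]
    have hcard : ∀ u ∈ (t \ s).powerset, (-1 : R) ^ #(s ∪ u) = (-1) ^ #s * (-1) ^ #u :=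
      fun u hu ↦ by
        rw [card_union_of_disjoint (disjoint_sdiff.mono_right (mem_powerset.1 hu)), pow_add]
    have halt : ∑ u ∈ (t \ s).powerset, (-1 : R) ^ #u = if t \ s = ∅ then 1 else 0 := by
      exact_mod_cast congrArg (Int.cast : ℤ → R) sum_powerset_neg_one_pow_card
    have hempty : t \ s = ∅ ↔ s = t := by
      rw [sdiff_eq_empty_iff_subset]
      exact ⟨subset_antisymm hst, fun h ↦ h.ge⟩
    simp only [sum_congr rfl hcard, ← mul_sum, halt, hempty, mul_ite, mul_one, mul_zero]
  · rw [Icc_eq_empty hst, sum_empty, if_neg (fun h ↦ hst h.le)]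

theorem sum_Icc_neg_one_pow_card_sub_left (s t : Finset α) :
    ∑ u ∈ Icc s t, (-1 : R) ^ (#u - #s) = if s = t then 1 else 0 := by
  rw [sum_congr rfl fun u hu ↦ neg_one_pow_sub_of_le (card_le_card (mem_Icc.1 hu).1),
    ← sum_mul, sum_Icc_neg_one_pow_card]
  split_ifs <;> simp [← pow_add, ← two_mul, pow_mul]

theorem sum_Icc_neg_one_pow_card_sub_right (s t : Finset α) :
    ∑ u ∈ Icc s t, (-1 : R) ^ (#t - #u) = if s = t then 1 else 0 := by
  rw [sum_congr rfl fun u hu ↦ neg_one_pow_sub_of_le (card_le_card (mem_Icc.1 hu).2),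
    ← mul_sum, sum_Icc_neg_one_pow_card]
  split_ifs with h <;> simp [h, ← pow_add, ← two_mul, pow_mul]

variable [Fintype α]

def upperMobius (f : Finset α → R) (s : Finset α) : R :=
  ∑ t with s ⊆ t, (-1) ^ (#t - #s) * f t

theorem sum_upperMobius_superset (f : Finset α → R) (s : Finset α) :
    ∑ a with s ⊆ a, upperMobius f a = f s := by
  unfold upperMobius
  rw [sum_comm' (t' := {t | s ⊆ t}) (s' := Icc s) fun a t ↦ by
    simp only [mem_filter_univ, mem_Icc]
    exact ⟨fun h ↦ ⟨⟨h.1, h.2⟩, h.1.trans h.2⟩, fun h ↦ ⟨h.1.1, h.1.2⟩⟩]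
  simp_rw [← sum_mul, sum_Icc_neg_one_pow_card_sub_right, ite_mul, one_mul, zero_mul]
  simp

theorem upperMobius_indicator_subset (d s : Finset α) :
    upperMobius (fun t ↦ if t ⊆ d then (1 : R) else 0) s = if s = d then 1 else 0 := by
  rw [upperMobius, ← sum_Icc_neg_one_pow_card_sub_left]
  simp_rw [mul_ite, mul_one, mul_zero, ← sum_filter, filter_filter]
  congr 1
  ext t
  simp

end Finset

def Finset.suppEquiv (α : Type*) [Fintype α] [DecidableEq α] : (α → Bool) ≃ Finset α where
  toFun ε := univ.filter fun i ↦ ε i = true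
  invFun s i := decide (i ∈ s)
  left_inv ε := by funext i; by_cases h : ε i <;> simp [h]
  right_inv s := by ext i; simp

def Finset.extendOne {α R : Type*} [One R] (p : {S : Finset α // S.Nonempty} → R)
    (T : Finset α) : R :=
  if h : T.Nonempty then p ⟨T, h⟩ else 1

theorem Finset.extendOne_add_smul {α R : Type*} [Ring R]
    (x y : {S : Finset α // S.Nonempty} → R) {a b : R} (hab : a + b = 1) :
    extendOne (a • x + b • y) = a • extendOne x + b • extendOne y := by
  funext T
  by_cases hT : T.Nonempty <;> simp [extendOne, hT, hab]

section CompleteProbabilityPolytope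

variable {n : ℕ}

theorem hFun_eq_upperMobius (ε : Fin n → Bool) (p : {S : Finset (Fin n) // S.Nonempty} → ℝ) :
    hFun n ε p = upperMobius (extendOne p) (suppEquiv (Fin n) ε) := by
  rw [hFun, upperMobius, sum_filter]
  rfl

theorem cpVertex_apply (δ : Fin n → Bool) (S : {S : Finset (Fin n) // S.Nonempty}) :
    cpVertex n δ S = if S.1 ⊆ suppEquiv (Fin n) δ then 1 else 0 := by
  simp [cpVertex, prod_boole, subset_iff, suppEquiv]

theorem extendOne_cpVertex (δ : Fin n → Bool) :
    extendOne (cpVertex n δ) = fun T ↦ if T ⊆ suppEquiv (Fin n) δ then 1 else 0 := by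
  funext T
  by_cases hT : T.Nonempty
  · rw [extendOne, dif_pos hT, cpVertex_apply]
  · simp [extendOne, not_nonempty_iff_eq_empty.1 hT]

theorem hFun_cpVertex (ε δ : Fin n → Bool) :
    hFun n ε (cpVertex n δ) = if ε = δ then 1 else 0 := by
  rw [hFun_eq_upperMobius, extendOne_cpVertex, upperMobius_indicator_subset]
  simp only [(suppEquiv (Fin n)).injective.eq_iff]

theorem hFun_add_smul (ε : Fin n → Bool) (x y : {S : Finset (Fin n) // S.Nonempty} → ℝ)
    {a b : ℝ} (hab : a + b = 1) :
    hFun n ε (a • x + b • y) = a * hFun n ε x + b * hFun n ε y := by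
  simp only [hFun_eq_upperMobius, upperMobius, extendOne_add_smul x y hab, mul_sum,
    ← sum_add_distrib, Pi.add_apply, Pi.smul_apply, smul_eq_mul]
  exact sum_congr rfl fun _ _ ↦ by ring

theorem convex_setOf_nonneg_hFun (ε : Fin n → Bool) :
    Convex ℝ {x | 0 ≤ hFun n ε x} := fun x hx y hy a b ha hb hab ↦ by
  simp only [Set.mem_ofPred_eq, hFun_add_smul ε x y hab] at hx hy ⊢
  positivity

theorem sum_hFun (p : {S : Finset (Fin n) // S.Nonempty} → ℝ) :
    ∑ ε, hFun n ε p = 1 := by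
  simp_rw [hFun_eq_upperMobius, (suppEquiv (Fin n)).sum_comp]
  simpa [extendOne] using sum_upperMobius_superset (extendOne p) ∅

theorem sum_hFun_smul_cpVertex (p : {S : Finset (Fin n) // S.Nonempty} → ℝ) :
    ∑ ε, hFun n ε p • cpVertex n ε = p := by
  funext S
  calc (∑ ε, hFun n ε p • cpVertex n ε) S
      = ∑ ε, if S.1 ⊆ suppEquiv (Fin n) ε then
          upperMobius (extendOne p) (suppEquiv (Fin n) ε) else 0 := by
        simp only [Finset.sum_apply, Pi.smul_apply, smul_eq_mul, cpVertex_apply, mul_ite, mul_one,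
          mul_zero, hFun_eq_upperMobius]
    _ = ∑ a with S.1 ⊆ a, upperMobius (extendOne p) a := by
        rw [(suppEquiv (Fin n)).sum_comp (fun a ↦ if S.1 ⊆ a then _ else 0), sum_filter]
    _ = p S := by rw [sum_upperMobius_superset, extendOne, dif_pos S.2]

end CompleteProbabilityPolytope

/-- `H`-representation of the complete probability polytope:
`p ∈ CP_n` if and only if `h(ε)(p) ≥ 0` for every `ε ∈ {0,1}^n`. -/
theorem mem_completeProbabilityPolytope_iff (n : ℕ)
    (p : {S : Finset (Fin n) // S.Nonempty} → ℝ) :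
    p ∈ convexHull ℝ (Set.range (cpVertex n)) ↔
      ∀ ε : Fin n → Bool, 0 ≤ hFun n ε p := by
  constructor
  · intro hp ε
    refine convexHull_min ?_ (convex_setOf_nonneg_hFun ε) hp
    rintro _ ⟨δ, rfl⟩
    rw [Set.mem_ofPred_eq, hFun_cpVertex]
    positivity
  · intro h
    have hmem := centerMass_mem_convexHull univ (fun ε _ ↦ h ε)
      (by rw [sum_hFun]; exact one_pos) (fun ε _ ↦ Set.mem_range_self (f := cpVertex n) ε)
    rwa [centerMass_eq_of_sum_1 _ _ (sum_hFun p), sum_hFun_smul_cpVertex] at hmem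
end

section
/- The complete probability polytope CP_n has exactly 2^n facets; equivalently, it is a simplex on 2^n affinely independent vertices, and each of the 2^n inequalities h(ε) ≥ 0 (with h(ε) = Σ_{T ⊇ supp(ε)} (−1)^{|T|−|supp(ε)|} p_T, p_∅ = 1) defines a facet of CP_n. -/
/-- The complete probability polytope `CP_n`. -/
noncomputable def CP (n : ℕ) : Set ({S : Finset (Fin n) // S.Nonempty} → ℝ) :=
  convexHull ℝ (Set.range (cpVertex n))

/-- The face of `CP_n` cut out by the valid inequality `h(ε) ≥ 0`. -/
noncomputable def cpFace (n : ℕ) (ε : Fin n → Bool) :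
    Set ({S : Finset (Fin n) // S.Nonempty} → ℝ) :=
  {p ∈ CP n | hFun n ε p = 0}

open Finset

section AffineMapSum
variable {k V₁ P V₂ ι : Type*} [Ring k] [AddCommGroup V₁] [Module k V₁] [AddTorsor V₁ P]
  [AddCommGroup V₂] [Module k V₂]

theorem AffineMap.coe_finset_sum (s : Finset ι) (g : ι → P →ᵃ[k] V₂) :
    ⇑(∑ i ∈ s, g i) = ∑ i ∈ s, ⇑(g i) :=
  map_sum (⟨⟨DFunLike.coe, AffineMap.coe_zero⟩, AffineMap.coe_add⟩ : (P →ᵃ[k] V₂) →+ P → V₂) g s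

end AffineMapSum

section Biorthogonal

variable {k V P ι : Type*} [Ring k] [AddCommGroup V] [Module k V] [AddTorsor V P]
  [DecidableEq ι] {v : ι → P} {f : ι → P →ᵃ[k] k}

theorem biorthogonal_apply_affineCombination (hf : ∀ i j, f i (v j) = if i = j then 1 else 0)
    (s : Finset ι) {w : ι → k} (hw : ∑ j ∈ s, w j = 1) (i : ι) :
    f i (s.affineCombination k v w) = Set.indicator s w i := by
  rw [s.map_affineCombination v w hw, affineCombination_eq_linear_combination _ _ _ hw]
  simp [hf, Set.indicator_apply]

theorem affineIndependent_of_biorthogonal (hf : ∀ i j, f i (v j) = if i = j then 1 else 0) :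
    AffineIndependent k v := by
  rw [affineIndependent_iff_indicator_eq_of_affineCombination_eq]
  intro s₁ s₂ w₁ w₂ hw₁ hw₂ heq
  funext i
  rw [← biorthogonal_apply_affineCombination hf s₁ hw₁, heq,
    biorthogonal_apply_affineCombination hf s₂ hw₂]

end Biorthogonal

section BiorthogonalConvex

variable {k V ι : Type*} [Field k] [LinearOrder k] [IsStrictOrderedRing k] [AddCommGroup V]
  [Module k V] [DecidableEq ι] {v : ι → V} {f : ι → V →ᵃ[k] k}

theorem biorthogonal_nonneg_of_mem_convexHull (hf : ∀ i j, f i (v j) = if i = j then 1 else 0)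
    {p : V} (hp : p ∈ convexHull k (Set.range v)) (i : ι) : 0 ≤ f i p := by
  obtain ⟨s, w, hw₀, hw₁, rfl⟩ := (convexHull_range_eq_exists_affineCombination v).subset hp
  rw [biorthogonal_apply_affineCombination hf s hw₁]
  exact Set.indicator_nonneg hw₀ i

theorem biorthogonal_face_eq_convexHull_image_ne
    (hf : ∀ i j, f i (v j) = if i = j then 1 else 0) (i : ι) :
    {p ∈ convexHull k (Set.range v) | f i p = 0} = convexHull k (v '' {j | j ≠ i}) := by
  apply Set.Subset.antisymm
  · rintro _ ⟨hp, hfp⟩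
    obtain ⟨s, w, hw₀, hw₁, rfl⟩ := (convexHull_range_eq_exists_affineCombination v).subset hp
    rw [biorthogonal_apply_affineCombination hf s hw₁] at hfp
    rw [affineCombination_eq_centerMass hw₁, ← centerMass_filter_ne_zero]
    refine centerMass_mem_convexHull _ (fun j hj => hw₀ j (mem_filter.1 hj).1) ?_ ?_
    · rw [sum_filter_ne_zero, hw₁]
      exact one_pos
    · intro j hj
      refine ⟨j, ?_, rfl⟩
      rintro rfl
      rw [mem_filter] at hj
      exact hj.2 (by simpa [hj.1] using hfp)
  · refine convexHull_min ?_ ((convex_convexHull k _).inter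
      ((convex_singleton 0).affine_preimage (f i)))
    rintro _ ⟨j, hji, rfl⟩
    exact ⟨subset_convexHull k _ (Set.mem_range_self j), by simp [hf, Ne.symm hji]⟩

theorem biorthogonal_face_injective (hf : ∀ i j, f i (v j) = if i = j then 1 else 0) :
    Function.Injective fun i => {p ∈ convexHull k (Set.range v) | f i p = 0} := by
  intro i j hij
  dsimp only at hij
  by_contra hne
  have hvi : v i ∈ {p ∈ convexHull k (Set.range v) | f j p = 0} :=
    ⟨subset_convexHull k _ (Set.mem_range_self i), by simp [hf, Ne.symm hne]⟩
  rw [← hij] at hvi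
  simpa [hf] using hvi.2

end BiorthogonalConvex

theorem sum_Icc_neg_one_pow_card_sub {α R : Type*} [DecidableEq α] [Ring R] (A B : Finset α) :
    ∑ T ∈ Icc A B, (-1 : R) ^ (#T - #A) = if A = B then 1 else 0 := by
  by_cases hAB : A ⊆ B
  · have hinj : Set.InjOn (A ∪ ·) (B \ A).powerset := by
      intro U hU U' hU' h
      simp only [coe_powerset, Set.mem_preimage, Set.mem_powerset_iff, coe_subset] at hU hU'
      rw [← union_sdiff_cancel_left (disjoint_of_subset_right hU disjoint_sdiff),
        ← union_sdiff_cancel_left (disjoint_of_subset_right hU' disjoint_sdiff)]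
      exact congrArg (· \ A) h
    rw [Icc_eq_image_powerset hAB, sum_image hinj]
    have hcard : ∀ U ∈ (B \ A).powerset, #(A ∪ U) - #A = #U := fun U hU => by
      rw [card_union_of_disjoint (disjoint_of_subset_right (mem_powerset.1 hU) disjoint_sdiff)]
      omega
    rw [sum_congr rfl fun U hU => by rw [hcard U hU]]
    have := congrArg (Int.cast : ℤ → R) (sum_powerset_neg_one_pow_card (x := B \ A))
    push_cast at this
    rw [this]
    exact if_congr (sdiff_eq_empty_iff_subset.trans
      ⟨fun h => subset_antisymm hAB h, by rintro rfl; rfl⟩) rfl rfl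
  · rw [Icc_eq_empty hAB, sum_empty, if_neg (by rintro rfl; exact hAB subset_rfl)]

theorem filter_eq_true_injective {α : Type*} [Fintype α] :
    Function.Injective fun ε : α → Bool => univ.filter (fun i => ε i = true) := by
  intro ε δ h
  funext i
  have hi := Finset.ext_iff.1 h i
  simp only [mem_filter, mem_univ, true_and] at hi
  exact Bool.eq_iff_iff.2 hi

namespace CP

variable {n : ℕ}

noncomputable def extendedCoord (T : Finset (Fin n)) :
    ({S : Finset (Fin n) // S.Nonempty} → ℝ) →ᵃ[ℝ] ℝ :=
  if h : T.Nonempty then (LinearMap.proj ⟨T, h⟩ : _ →ₗ[ℝ] ℝ).toAffineMap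
  else AffineMap.const ℝ _ 1

theorem extendedCoord_apply (T : Finset (Fin n)) (p : {S : Finset (Fin n) // S.Nonempty} → ℝ) :
    extendedCoord T p = if h : T.Nonempty then p ⟨T, h⟩ else 1 := by
  unfold extendedCoord
  split_ifs <;> rfl

theorem extendedCoord_cpVertex (T : Finset (Fin n)) (δ : Fin n → Bool) :
    extendedCoord T (cpVertex n δ) = if T ⊆ univ.filter (fun i => δ i = true) then 1 else 0 := by
  have : extendedCoord T (cpVertex n δ) = ∏ i ∈ T, (if δ i then (1 : ℝ) else 0) := by
    rw [extendedCoord_apply]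
    split_ifs with hT
    · rfl
    · rw [not_nonempty_iff_eq_empty.1 hT, prod_empty]
  rw [this, prod_boole]
  simp [subset_iff]

noncomputable def hFunAffine (n : ℕ) (ε : Fin n → Bool) :
    ({S : Finset (Fin n) // S.Nonempty} → ℝ) →ᵃ[ℝ] ℝ :=
  ∑ T : Finset (Fin n),
    (if univ.filter (fun i => ε i = true) ⊆ T then
      (-1 : ℝ) ^ (#T - #(univ.filter (fun i => ε i = true))) else 0) • extendedCoord T

theorem coe_hFunAffine (ε : Fin n → Bool) : ⇑(hFunAffine n ε) = hFun n ε := by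
  funext p
  simp only [hFunAffine, AffineMap.coe_finset_sum, AffineMap.coe_smul, Finset.sum_apply,
    Pi.smul_apply, smul_eq_mul, extendedCoord_apply, hFun, ite_mul, zero_mul]

theorem hFunAffine_cpVertex (ε δ : Fin n → Bool) :
    hFunAffine n ε (cpVertex n δ) = if ε = δ then 1 else 0 := by
  set A := univ.filter (fun i => ε i = true)
  set B := univ.filter (fun i => δ i = true)
  have hterm : ∀ T, (if A ⊆ T then (-1 : ℝ) ^ (#T - #A) else 0) * (if T ⊆ B then 1 else 0)
      = if T ∈ Icc A B then (-1 : ℝ) ^ (#T - #A) else 0 := by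
    intro T
    simp only [mem_Icc]
    split_ifs <;> simp_all
  simp only [hFunAffine, AffineMap.coe_finset_sum, AffineMap.coe_smul, Finset.sum_apply,
    Pi.smul_apply, smul_eq_mul, extendedCoord_cpVertex]
  rw [sum_congr rfl fun T _ => hterm T, sum_ite_mem, univ_inter, sum_Icc_neg_one_pow_card_sub]
  exact if_congr filter_eq_true_injective.eq_iff rfl rfl

end CP

/-- `CP_n` is a simplex on `2^n` affinely independent vertices; each of
the `2^n` inequalities `h(ε) ≥ 0` is valid and cuts out the facet spanned by the
remaining `2^n − 1` vertices; these facets are pairwise distinct, so `CP_n` has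
exactly `2^n` of them. -/
theorem cp_simplex_and_facets (n : ℕ) :
    AffineIndependent ℝ (cpVertex n) ∧
    (∀ ε : Fin n → Bool, ∀ p ∈ CP n, 0 ≤ hFun n ε p) ∧
    (∀ ε : Fin n → Bool,
      cpFace n ε = convexHull ℝ (cpVertex n '' {δ | δ ≠ ε})) ∧
    Function.Injective (cpFace n) ∧
    (Set.range (cpFace n)).ncard = 2 ^ n := by
  have hdual := CP.hFunAffine_cpVertex (n := n)
  have hface : cpFace n = fun ε => {p ∈ CP n | CP.hFunAffine n ε p = 0} := by
    simp only [CP.coe_hFunAffine]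
    rfl
  have hinj : Function.Injective (cpFace n) := hface ▸ biorthogonal_face_injective hdual
  refine ⟨affineIndependent_of_biorthogonal hdual, fun ε p hp => ?_,
    fun ε => hface ▸ biorthogonal_face_eq_convexHull_image_ne hdual ε, hinj, ?_⟩
  · simpa only [CP.coe_hFunAffine] using biorthogonal_nonneg_of_mem_convexHull hdual hp ε
  · rw [Set.ncard_range_of_injective hinj, Nat.card_eq_fintype_card, Fintype.card_fun,
      Fintype.card_bool, Fintype.card_fin]
end

section
/- (Fine / CHSH) Let p_1, p_2, p_3, p_4, p_{13}, p_{14}, p_{23}, p_{24} ∈ [0,1]. The vector (p_1,p_2,p_3,p_4,p_{13},p_{14},p_{23},p_{24}) lies in the convex hull of the 16 vectors (ε_1, ε_2, ε_3, ε_4, ε_1ε_3, ε_1ε_4, ε_2ε_3, ε_2ε_4), ε ∈ {0,1}^4, if and only if: 0 ≤ p_{ij} ≤ p_i, p_{ij} ≤ p_j, p_i + p_j − p_{ij} ≤ 1 for ij ∈ {13,14,23,24}, and the eight CHSH inequalities −1 ≤ p_{is} + p_{is'} + p_{js'} − p_{js} − p_i − p_{s'} ≤ 0 for all choices {i,j}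 = {1,2}, {s,s'} = {3,4}. -/
/-!
A point of the CHSH polytope is the vector of one- and two-point marginals of a probability
distribution on `{0,1}⁴`, so every inequality of the list is an average of inequalities that
hold at the sixteen vertices. Conversely (Fine), the missing correlation `p₃₄` can be chosen so
that both triples `(ε₁, ε₃, ε₄)` and `(ε₂, ε₃, ε₄)` admit joint distributions: the two
admissible intervals for `p₃₄` meet precisely because of the CHSH inequalities. The two triple
distributions are then glued along their common `(ε₃, ε₄)`-marginal, coupling `ε₁` and `ε₂`
inside each cell `{ε₃ = c, ε₄ = d}`.
-/

/-- `{0,1}`-valued assignment as a real number. -/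
noncomputable def bv (b : Bool) : ℝ := if b then 1 else 0

/-- Vertex of the CHSH correlation polytope:
`(ε₁, ε₂, ε₃, ε₄, ε₁ε₃, ε₁ε₄, ε₂ε₃, ε₂ε₄)`. -/
noncomputable def chshVertex (ε : Fin 4 → Bool) : Fin 8 → ℝ :=
  ![bv (ε 0), bv (ε 1), bv (ε 2), bv (ε 3),
    bv (ε 0) * bv (ε 2), bv (ε 0) * bv (ε 3),
    bv (ε 1) * bv (ε 2), bv (ε 1) * bv (ε 3)]

open Set

theorem Fin.sum_univ_pi_succ {α M : Type*} [Fintype α] [AddCommMonoid M] {n : ℕ}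
    (f : (Fin (n + 1) → α) → M) :
    ∑ ε, f ε = ∑ a, ∑ ε : Fin n → α, f (Matrix.vecCons a ε) := by
  rw [← (Fin.consEquiv fun _ => α).sum_comp, Fintype.sum_prod_type]
  rfl

theorem Finset.exists_between_of_forall_le {α : Type*} [LinearOrder α] {L U : Finset α}
    (hL : L.Nonempty) (h : ∀ l ∈ L, ∀ u ∈ U, l ≤ u) :
    ∃ t, (∀ l ∈ L, l ≤ t) ∧ ∀ u ∈ U, t ≤ u :=
  ⟨L.max' hL, L.le_max', fun u hu => L.max'_le hL u fun l hl => h l hl u hu⟩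

def PairBounds (a b ab : ℝ) : Prop :=
  0 ≤ ab ∧ ab ≤ a ∧ ab ≤ b ∧ a + b - ab ≤ 1

def CHSHBounds (p_i p_s' p_is p_is' p_js p_js' : ℝ) : Prop :=
  -1 ≤ p_is + p_is' + p_js' - p_js - p_i - p_s' ∧ p_is + p_is' + p_js' - p_js - p_i - p_s' ≤ 0

/-- Boole's conditions on the one- and two-point marginals of three events `A`, `B`, `C`. -/
def TripleBounds (a b c ab ac bc : ℝ) : Prop :=
  PairBounds a b ab ∧ PairBounds a c ac ∧ PairBounds b c bc ∧
    ab + ac - bc ≤ a ∧ ab + bc - ac ≤ b ∧ ac + bc - ab ≤ c ∧ a + b + c - ab - ac - bc ≤ 1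

def chshInequalities : Set (Fin 8 → ℝ) :=
  {x | PairBounds (x 0) (x 2) (x 4) ∧ PairBounds (x 0) (x 3) (x 5) ∧
    PairBounds (x 1) (x 2) (x 6) ∧ PairBounds (x 1) (x 3) (x 7) ∧
    CHSHBounds (x 0) (x 3) (x 4) (x 5) (x 6) (x 7) ∧
    CHSHBounds (x 1) (x 3) (x 6) (x 7) (x 4) (x 5) ∧
    CHSHBounds (x 0) (x 2) (x 5) (x 4) (x 7) (x 6) ∧
    CHSHBounds (x 1) (x 2) (x 7) (x 6) (x 5) (x 4)}

section Convexity

variable {s t : ℝ}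

theorem PairBounds.convex_comb {a b ab a' b' ab' : ℝ} (h : PairBounds a b ab)
    (h' : PairBounds a' b' ab') (hs : 0 ≤ s) (ht : 0 ≤ t) (hst : s + t = 1) :
    PairBounds (s * a + t * a') (s * b + t * b') (s * ab + t * ab') := by
  obtain ⟨h₀, ha, hb, h₁⟩ := h
  obtain ⟨h₀', ha', hb', h₁'⟩ := h'
  and_intros <;> nlinarith

theorem CHSHBounds.convex_comb {a b c d e f a' b' c' d' e' f' : ℝ}
    (h : CHSHBounds a b c d e f) (h' : CHSHBounds a' b' c' d' e' f')
    (hs : 0 ≤ s) (ht : 0 ≤ t) (hst : s + t = 1) :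
    CHSHBounds (s * a + t * a') (s * b + t * b') (s * c + t * c') (s * d + t * d')
      (s * e + t * e') (s * f + t * f') := by
  obtain ⟨h₀, h₁⟩ := h
  obtain ⟨h₀', h₁'⟩ := h'
  constructor <;> nlinarith

end Convexity

theorem convex_chshInequalities : Convex ℝ chshInequalities := by
  rintro x ⟨hx₁, hx₂, hx₃, hx₄, hx₅, hx₆, hx₇, hx₈⟩ y ⟨hy₁, hy₂, hy₃, hy₄, hy₅, hy₆, hy₇, hy₈⟩
    s t hs ht hst
  exact ⟨hx₁.convex_comb hy₁ hs ht hst, hx₂.convex_comb hy₂ hs ht hst,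
    hx₃.convex_comb hy₃ hs ht hst, hx₄.convex_comb hy₄ hs ht hst,
    hx₅.convex_comb hy₅ hs ht hst, hx₆.convex_comb hy₆ hs ht hst,
    hx₇.convex_comb hy₇ hs ht hst, hx₈.convex_comb hy₈ hs ht hst⟩

theorem pairBounds_bv (a b : Bool) : PairBounds (bv a) (bv b) (bv a * bv b) := by
  cases a <;> cases b <;> norm_num [PairBounds, bv]

theorem chshBounds_bv (a b c d : Bool) :
    CHSHBounds (bv a) (bv d) (bv a * bv c) (bv a * bv d) (bv b * bv c) (bv b * bv d) := by
  cases a <;> cases b <;> cases c <;> cases d <;> norm_num [CHSHBounds, bv]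

theorem chshVertex_mem_chshInequalities (ε : Fin 4 → Bool) :
    chshVertex ε ∈ chshInequalities :=
  ⟨pairBounds_bv _ _, pairBounds_bv _ _, pairBounds_bv _ _, pairBounds_bv _ _,
    chshBounds_bv _ _ _ _, chshBounds_bv _ _ _ _, chshBounds_bv _ _ _ _, chshBounds_bv _ _ _ _⟩

theorem convexHull_subset_chshInequalities :
    convexHull ℝ (range chshVertex) ⊆ chshInequalities :=
  convexHull_min (range_subset_iff.2 chshVertex_mem_chshInequalities) convex_chshInequalities

theorem exists_tripleBounds_of_chshBounds {p1 p2 p3 p4 p13 p14 p23 p24 : ℝ}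
    (h13 : PairBounds p1 p3 p13) (h14 : PairBounds p1 p4 p14)
    (h23 : PairBounds p2 p3 p23) (h24 : PairBounds p2 p4 p24)
    (c1 : CHSHBounds p1 p4 p13 p14 p23 p24) (c2 : CHSHBounds p2 p4 p23 p24 p13 p14)
    (c3 : CHSHBounds p1 p3 p14 p13 p24 p23) (c4 : CHSHBounds p2 p3 p24 p23 p14 p13) :
    ∃ p34, TripleBounds p1 p3 p4 p13 p14 p34 ∧ TripleBounds p2 p3 p4 p23 p24 p34 := by
  unfold PairBounds CHSHBounds at *
  casesm* _ ∧ _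
  -- Every lower bound on `p₃₄` lies below every upper bound: this is where CHSH is used.
  obtain ⟨p34, hl, hu⟩ := Finset.exists_between_of_forall_le
    (L := {0, p3 + p4 - 1, p13 + p14 - p1, p1 + p3 + p4 - 1 - p13 - p14,
      p23 + p24 - p2, p2 + p3 + p4 - 1 - p23 - p24})
    (U := {p3, p4, p3 + p14 - p13, p4 + p13 - p14, p3 + p24 - p23, p4 + p23 - p24})
    (Finset.insert_nonempty _ _) (by
      simp only [Finset.mem_insert, Finset.mem_singleton, forall_eq_or_imp, forall_eq]
      and_intros <;> linarith)
  simp only [Finset.mem_insert, Finset.mem_singleton, forall_eq_or_imp, forall_eq] at hl hu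
  refine ⟨p34, ?_⟩
  unfold TripleBounds PairBounds
  and_intros <;> linarith

/-- Inclusion–exclusion: the mass of `A ∩ {ε_B = x, ε_C = y}` when `P A = q`, `P (A ∩ B) = qb`,
`P (A ∩ C) = qc` and `P (A ∩ B ∩ C) = qbc`. -/
def cellMass (q qb qc qbc : ℝ) : Bool → Bool → ℝ
  | true, true => qbc
  | true, false => qb - qbc
  | false, true => qc - qbc
  | false, false => q - qb - qc + qbc

/-- `t` is the mass of `A ∩ B ∩ C` in a joint distribution of three events with the given
marginals. -/
theorem TripleBounds.exists_cellMass {a b c ab ac bc : ℝ} (h : TripleBounds a b c ab ac bc) :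
    ∃ t, ∀ x y, 0 ≤ cellMass a ab ac t x y ∧ cellMass a ab ac t x y ≤ cellMass 1 b c bc x y := by
  unfold TripleBounds PairBounds at h
  casesm* _ ∧ _
  obtain ⟨t, hl, hu⟩ := Finset.exists_between_of_forall_le
    (L := {0, ab + ac - a, ab + bc - b, ac + bc - c})
    (U := {bc, ab, ac, 1 - a - b - c + ab + ac + bc})
    (Finset.insert_nonempty _ _) (by
      simp only [Finset.mem_insert, Finset.mem_singleton, forall_eq_or_imp, forall_eq]
      and_intros <;> linarith)
  simp only [Finset.mem_insert, Finset.mem_singleton, forall_eq_or_imp, forall_eq] at hl hu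
  refine ⟨t, fun x y => ?_⟩
  cases x <;> cases y <;> simp only [cellMass] <;> constructor <;> linarith

/-- The coupling of two events of masses `a` and `b` inside a set of mass `m` in which the
overlap is as large as possible. -/
noncomputable def boolCoupling (m a b : ℝ) : Bool → Bool → ℝ
  | true, true => min a b
  | true, false => a - min a b
  | false, true => b - min a b
  | false, false => m - a - b + min a b

theorem boolCoupling_nonneg {m a b : ℝ} (ha : 0 ≤ a) (ham : a ≤ m) (hb : 0 ≤ b) (hbm : b ≤ m)
    (x y : Bool) : 0 ≤ boolCoupling m a b x y := by
  have := le_min ha hb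
  have := min_le_left a b
  have := min_le_right a b
  -- the last cell has mass `m - max a b`
  have := min_add_max a b
  have := max_le ham hbm
  cases x <;> cases y <;> simp only [boolCoupling] <;> linarith

/-- Fine's gluing: inside each cell `{ε₃ = c, ε₄ = d}` of mass `m c d`, couple the events
`{ε₁ = 1}` and `{ε₂ = 1}` of masses `a c d` and `b c d`. -/
noncomputable def fineWeight (m a b : Bool → Bool → ℝ) (ε : Fin 4 → Bool) : ℝ :=
  boolCoupling (m (ε 2) (ε 3)) (a (ε 2) (ε 3)) (b (ε 2) (ε 3)) (ε 0) (ε 1)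

section FineWeight

variable (x : Fin 8 → ℝ) (p34 t1 t2 : ℝ)

theorem sum_fineWeight :
    ∑ ε, fineWeight (cellMass 1 (x 2) (x 3) p34) (cellMass (x 0) (x 4) (x 5) t1)
      (cellMass (x 1) (x 6) (x 7) t2) ε = 1 := by
  simp only [Fin.sum_univ_pi_succ, Fintype.sum_unique, Fintype.sum_bool, fineWeight]
  simp only [boolCoupling, cellMass, Matrix.cons_val_zero, Matrix.cons_val_one, Matrix.cons_val]
  ring

theorem sum_fineWeight_smul_chshVertex :
    ∑ ε, fineWeight (cellMass 1 (x 2) (x 3) p34) (cellMass (x 0) (x 4) (x 5) t1)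
      (cellMass (x 1) (x 6) (x 7) t2) ε • chshVertex ε = x := by
  ext i
  simp only [Finset.sum_apply, Pi.smul_apply, smul_eq_mul, Fin.sum_univ_pi_succ,
    Fintype.sum_unique, Fintype.sum_bool, fineWeight]
  fin_cases i <;> simp only [boolCoupling, cellMass, chshVertex, bv,
    Matrix.cons_val_zero, Matrix.cons_val_one, Matrix.cons_val, Fin.zero_eta, Fin.mk_one,
    Fin.reduceFinMk, ↓reduceIte, Bool.false_eq_true] <;> ring

end FineWeight

theorem chshInequalities_subset_convexHull :
    chshInequalities ⊆ convexHull ℝ (range chshVertex) := by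
  rintro x ⟨h13, h14, h23, h24, c1, c2, c3, c4⟩
  obtain ⟨p34, hT1, hT2⟩ := exists_tripleBounds_of_chshBounds h13 h14 h23 h24 c1 c2 c3 c4
  obtain ⟨t1, ht1⟩ := hT1.exists_cellMass
  obtain ⟨t2, ht2⟩ := hT2.exists_cellMass
  refine mem_convexHull_of_exists_fintype _ chshVertex (fun ε => ?_) (sum_fineWeight x p34 t1 t2)
    mem_range_self (sum_fineWeight_smul_chshVertex x p34 t1 t2)
  exact boolCoupling_nonneg (ht1 _ _).1 (ht1 _ _).2 (ht2 _ _).1 (ht2 _ _).2 _ _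

theorem convexHull_range_chshVertex : convexHull ℝ (range chshVertex) = chshInequalities :=
  convexHull_subset_chshInequalities.antisymm chshInequalities_subset_convexHull

theorem mem_chsh_polytope_iff_general
    (p1 p2 p3 p4 p13 p14 p23 p24 : ℝ) :
    (![p1, p2, p3, p4, p13, p14, p23, p24]
        ∈ convexHull ℝ (Set.range chshVertex)) ↔
      ((0 ≤ p13 ∧ p13 ≤ p1 ∧ p13 ≤ p3 ∧ p1 + p3 - p13 ≤ 1) ∧
       (0 ≤ p14 ∧ p14 ≤ p1 ∧ p14 ≤ p4 ∧ p1 + p4 - p14 ≤ 1) ∧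
       (0 ≤ p23 ∧ p23 ≤ p2 ∧ p23 ≤ p3 ∧ p2 + p3 - p23 ≤ 1) ∧
       (0 ≤ p24 ∧ p24 ≤ p2 ∧ p24 ≤ p4 ∧ p2 + p4 - p24 ≤ 1) ∧
       (-1 ≤ p13 + p14 + p24 - p23 - p1 - p4 ∧ p13 + p14 + p24 - p23 - p1 - p4 ≤ 0) ∧
       (-1 ≤ p23 + p24 + p14 - p13 - p2 - p4 ∧ p23 + p24 + p14 - p13 - p2 - p4 ≤ 0) ∧
       (-1 ≤ p14 + p13 + p23 - p24 - p1 - p3 ∧ p14 + p13 + p23 - p24 - p1 - p3 ≤ 0) ∧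
       (-1 ≤ p24 + p23 + p13 - p14 - p2 - p3 ∧ p24 + p23 + p13 - p14 - p2 - p3 ≤ 0)) := by
  rw [convexHull_range_chshVertex]
  exact Iff.rfl

/-- Fine / CHSH: `(p₁,p₂,p₃,p₄,p₁₃,p₁₄,p₂₃,p₂₄)` with all single
probabilities in `[0,1]` lies in the CHSH polytope iff it satisfies the trivial
pair inequalities and the eight CHSH inequalities. -/
theorem mem_chsh_polytope_iff
    (p1 p2 p3 p4 p13 p14 p23 p24 : ℝ)
    (h1 : 0 ≤ p1 ∧ p1 ≤ 1) (h2 : 0 ≤ p2 ∧ p2 ≤ 1)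
    (h3 : 0 ≤ p3 ∧ p3 ≤ 1) (h4 : 0 ≤ p4 ∧ p4 ≤ 1) :
    (![p1, p2, p3, p4, p13, p14, p23, p24]
        ∈ convexHull ℝ (Set.range chshVertex)) ↔
      ((0 ≤ p13 ∧ p13 ≤ p1 ∧ p13 ≤ p3 ∧ p1 + p3 - p13 ≤ 1) ∧
       (0 ≤ p14 ∧ p14 ≤ p1 ∧ p14 ≤ p4 ∧ p1 + p4 - p14 ≤ 1) ∧
       (0 ≤ p23 ∧ p23 ≤ p2 ∧ p23 ≤ p3 ∧ p2 + p3 - p23 ≤ 1) ∧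
       (0 ≤ p24 ∧ p24 ≤ p2 ∧ p24 ≤ p4 ∧ p2 + p4 - p24 ≤ 1) ∧
       (-1 ≤ p13 + p14 + p24 - p23 - p1 - p4 ∧ p13 + p14 + p24 - p23 - p1 - p4 ≤ 0) ∧
       (-1 ≤ p23 + p24 + p14 - p13 - p2 - p4 ∧ p23 + p24 + p14 - p13 - p2 - p4 ≤ 0) ∧
       (-1 ≤ p14 + p13 + p23 - p24 - p1 - p3 ∧ p14 + p13 + p23 - p24 - p1 - p3 ≤ 0) ∧
       (-1 ≤ p24 + p23 + p13 - p14 - p2 - p3 ∧ p24 + p23 + p13 - p14 - p2 - p3 ≤ 0)) :=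
  mem_chsh_polytope_iff_general p1 p2 p3 p4 p13 p14 p23 p24
end

section
/- (Bell–Wigner polytope) A vector (p_1, p_2, p_3, p_{12}, p_{13}, p_{23}) ∈ ℝ^6 lies in the convex hull of the 8 vectors (ε_1, ε_2, ε_3, ε_1ε_2, ε_1ε_3, ε_2ε_3), ε ∈ {0,1}^3, if and only if: 0 ≤ p_{ij} ≤ min(p_i, p_j) and p_i + p_j − p_{ij} ≤ 1 for all pairs ij; 1 − p_1 − p_2 − p_3 + p_{12} + p_{13} + p_{23} ≥ 0; p_1 − p_{12} − p_{13} + p_{23} ≥ 0; p_2 − p_{12} − p_{23} + p_{13} ≥ 0; and p_3 − p_{13} − p_{23} + p_{12} ≥ 0. -/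
/-- Vertex of the Bell–Wigner polytope: `(ε₁, ε₂, ε₃, ε₁ε₂, ε₁ε₃, ε₂ε₃)`. -/
noncomputable def bwVertex (ε : Fin 3 → Bool) : Fin 6 → ℝ :=
  ![bv (ε 0), bv (ε 1), bv (ε 2),
    bv (ε 0) * bv (ε 1), bv (ε 0) * bv (ε 2), bv (ε 1) * bv (ε 2)]

section helpers

variable {α : Type*}

lemma v6_0 (a0 a1 a2 a3 a4 a5 : α) : ![a0,a1,a2,a3,a4,a5] 0 = a0 := rfl
lemma v6_1 (a0 a1 a2 a3 a4 a5 : α) : ![a0,a1,a2,a3,a4,a5] 1 = a1 := rfl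
lemma v6_2 (a0 a1 a2 a3 a4 a5 : α) : ![a0,a1,a2,a3,a4,a5] 2 = a2 := rfl
lemma v6_3 (a0 a1 a2 a3 a4 a5 : α) : ![a0,a1,a2,a3,a4,a5] 3 = a3 := rfl
lemma v6_4 (a0 a1 a2 a3 a4 a5 : α) : ![a0,a1,a2,a3,a4,a5] 4 = a4 := rfl
lemma v6_5 (a0 a1 a2 a3 a4 a5 : α) : ![a0,a1,a2,a3,a4,a5] 5 = a5 := rfl

lemma v8_0 (a0 a1 a2 a3 a4 a5 a6 a7 : α) : ![a0,a1,a2,a3,a4,a5,a6,a7] 0 = a0 := rfl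
lemma v8_1 (a0 a1 a2 a3 a4 a5 a6 a7 : α) : ![a0,a1,a2,a3,a4,a5,a6,a7] 1 = a1 := rfl
lemma v8_2 (a0 a1 a2 a3 a4 a5 a6 a7 : α) : ![a0,a1,a2,a3,a4,a5,a6,a7] 2 = a2 := rfl
lemma v8_3 (a0 a1 a2 a3 a4 a5 a6 a7 : α) : ![a0,a1,a2,a3,a4,a5,a6,a7] 3 = a3 := rfl
lemma v8_4 (a0 a1 a2 a3 a4 a5 a6 a7 : α) : ![a0,a1,a2,a3,a4,a5,a6,a7] 4 = a4 := rfl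
lemma v8_5 (a0 a1 a2 a3 a4 a5 a6 a7 : α) : ![a0,a1,a2,a3,a4,a5,a6,a7] 5 = a5 := rfl
lemma v8_6 (a0 a1 a2 a3 a4 a5 a6 a7 : α) : ![a0,a1,a2,a3,a4,a5,a6,a7] 6 = a6 := rfl
lemma v8_7 (a0 a1 a2 a3 a4 a5 a6 a7 : α) : ![a0,a1,a2,a3,a4,a5,a6,a7] 7 = a7 := rfl

lemma v3_0 (a0 a1 a2 : α) : ![a0,a1,a2] 0 = a0 := rfl
lemma v3_1 (a0 a1 a2 : α) : ![a0,a1,a2] 1 = a1 := rfl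
lemma v3_2 (a0 a1 a2 : α) : ![a0,a1,a2] 2 = a2 := rfl

lemma v6m_0 (a0 a1 a2 a3 a4 a5 : α) (h : 0 < 6) : ![a0,a1,a2,a3,a4,a5] ⟨0,h⟩ = a0 := rfl
lemma v6m_1 (a0 a1 a2 a3 a4 a5 : α) (h : 1 < 6) : ![a0,a1,a2,a3,a4,a5] ⟨1,h⟩ = a1 := rfl
lemma v6m_2 (a0 a1 a2 a3 a4 a5 : α) (h : 2 < 6) : ![a0,a1,a2,a3,a4,a5] ⟨2,h⟩ = a2 := rfl
lemma v6m_3 (a0 a1 a2 a3 a4 a5 : α) (h : 3 < 6) : ![a0,a1,a2,a3,a4,a5] ⟨3,h⟩ = a3 := rfl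
lemma v6m_4 (a0 a1 a2 a3 a4 a5 : α) (h : 4 < 6) : ![a0,a1,a2,a3,a4,a5] ⟨4,h⟩ = a4 := rfl
lemma v6m_5 (a0 a1 a2 a3 a4 a5 : α) (h : 5 < 6) : ![a0,a1,a2,a3,a4,a5] ⟨5,h⟩ = a5 := rfl

lemma bv_true : bv true = 1 := rfl
lemma bv_false : bv false = 0 := rfl

end helpers

def bwSet : Set (Fin 6 → ℝ) :=
  {x | (0 ≤ x 3 ∧ x 3 ≤ x 0 ∧ x 3 ≤ x 1 ∧ x 0 + x 1 - x 3 ≤ 1) ∧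
       (0 ≤ x 4 ∧ x 4 ≤ x 0 ∧ x 4 ≤ x 2 ∧ x 0 + x 2 - x 4 ≤ 1) ∧
       (0 ≤ x 5 ∧ x 5 ≤ x 1 ∧ x 5 ≤ x 2 ∧ x 1 + x 2 - x 5 ≤ 1) ∧
       1 - x 0 - x 1 - x 2 + x 3 + x 4 + x 5 ≥ 0 ∧
       x 0 - x 3 - x 4 + x 5 ≥ 0 ∧
       x 1 - x 3 - x 5 + x 4 ≥ 0 ∧
       x 2 - x 4 - x 5 + x 3 ≥ 0}

lemma bwSet_convex : Convex ℝ bwSet := by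
  intro x hx y hy a b ha hb hab
  obtain ⟨⟨h1, h2, h3, h4⟩, ⟨h5, h6, h7, h8⟩, ⟨h9, h10, h11, h12⟩, h13, h14, h15, h16⟩ := hx
  obtain ⟨⟨g1, g2, g3, g4⟩, ⟨g5, g6, g7, g8⟩, ⟨g9, g10, g11, g12⟩, g13, g14, g15, g16⟩ := hy
  refine ⟨⟨?_, ?_, ?_, ?_⟩, ⟨?_, ?_, ?_, ?_⟩, ⟨?_, ?_, ?_, ?_⟩, ?_, ?_, ?_, ?_⟩ <;>
      simp only [Pi.add_apply, Pi.smul_apply, smul_eq_mul]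
  · linarith [mul_nonneg ha h1, mul_nonneg hb g1]
  · linarith [mul_le_mul_of_nonneg_left h2 ha, mul_le_mul_of_nonneg_left g2 hb]
  · linarith [mul_le_mul_of_nonneg_left h3 ha, mul_le_mul_of_nonneg_left g3 hb]
  · linarith [mul_le_mul_of_nonneg_left h4 ha, mul_le_mul_of_nonneg_left g4 hb]
  · linarith [mul_nonneg ha h5, mul_nonneg hb g5]
  · linarith [mul_le_mul_of_nonneg_left h6 ha, mul_le_mul_of_nonneg_left g6 hb]
  · linarith [mul_le_mul_of_nonneg_left h7 ha, mul_le_mul_of_nonneg_left g7 hb]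
  · linarith [mul_le_mul_of_nonneg_left h8 ha, mul_le_mul_of_nonneg_left g8 hb]
  · linarith [mul_nonneg ha h9, mul_nonneg hb g9]
  · linarith [mul_le_mul_of_nonneg_left h10 ha, mul_le_mul_of_nonneg_left g10 hb]
  · linarith [mul_le_mul_of_nonneg_left h11 ha, mul_le_mul_of_nonneg_left g11 hb]
  · linarith [mul_le_mul_of_nonneg_left h12 ha, mul_le_mul_of_nonneg_left g12 hb]
  · linarith [mul_nonneg ha h13, mul_nonneg hb g13]
  · linarith [mul_nonneg ha h14, mul_nonneg hb g14]
  · linarith [mul_nonneg ha h15, mul_nonneg hb g15]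
  · linarith [mul_nonneg ha h16, mul_nonneg hb g16]

lemma bwVertex_mem (ε : Fin 3 → Bool) : bwVertex ε ∈ bwSet := by
  cases he0 : ε 0 <;> cases he1 : ε 1 <;> cases he2 : ε 2 <;>
    simp only [bwSet, bwVertex, he0, he1, he2, bv_true, bv_false, Set.mem_setOf_eq,
      v6_0, v6_1, v6_2, v6_3, v6_4, v6_5] <;> norm_num

/-- Bell–Wigner polytope: `(p₁,p₂,p₃,p₁₂,p₁₃,p₂₃) ∈ ℝ⁶` lies in the
convex hull of the 8 vertices iff it satisfies the listed inequalities. -/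
theorem mem_bellWigner_polytope_iff (p1 p2 p3 p12 p13 p23 : ℝ) :
    (![p1, p2, p3, p12, p13, p23] ∈ convexHull ℝ (Set.range bwVertex)) ↔
      ((0 ≤ p12 ∧ p12 ≤ p1 ∧ p12 ≤ p2 ∧ p1 + p2 - p12 ≤ 1) ∧
       (0 ≤ p13 ∧ p13 ≤ p1 ∧ p13 ≤ p3 ∧ p1 + p3 - p13 ≤ 1) ∧
       (0 ≤ p23 ∧ p23 ≤ p2 ∧ p23 ≤ p3 ∧ p2 + p3 - p23 ≤ 1) ∧
       1 - p1 - p2 - p3 + p12 + p13 + p23 ≥ 0 ∧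
       p1 - p12 - p13 + p23 ≥ 0 ∧
       p2 - p12 - p23 + p13 ≥ 0 ∧
       p3 - p13 - p23 + p12 ≥ 0) := by
  constructor
  · intro h
    have hsub : convexHull ℝ (Set.range bwVertex) ⊆ bwSet :=
      convexHull_min (by rintro x ⟨ε, rfl⟩; exact bwVertex_mem ε) bwSet_convex
    have hmem := hsub h
    simp only [bwSet, Set.mem_setOf_eq, v6_0, v6_1, v6_2, v6_3, v6_4, v6_5] at hmem
    exact hmem
  · rintro ⟨⟨h1, h2, h3, h4⟩, ⟨h5, h6, h7, h8⟩, ⟨h9, h10, h11, h12⟩, h13, h14, h15, h16⟩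
    set t : ℝ := max (max 0 (p12 + p13 - p1)) (max (p12 + p23 - p2) (p13 + p23 - p3)) with ht
    have ht0 : 0 ≤ t := le_trans (le_max_left 0 _) (le_max_left _ _)
    have htA : p12 + p13 - p1 ≤ t := le_trans (le_max_right 0 _) (le_max_left _ _)
    have htB : p12 + p23 - p2 ≤ t := le_trans (le_max_left _ _) (le_max_right _ _)
    have htC : p13 + p23 - p3 ≤ t := le_trans (le_max_right _ _) (le_max_right _ _)
    have ht12 : t ≤ p12 :=
      max_le (max_le (by linarith) (by linarith)) (max_le (by linarith) (by linarith))
    have ht13 : t ≤ p13 :=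
      max_le (max_le (by linarith) (by linarith)) (max_le (by linarith) (by linarith))
    have ht23 : t ≤ p23 :=
      max_le (max_le (by linarith) (by linarith)) (max_le (by linarith) (by linarith))
    have htU : t ≤ 1 - p1 - p2 - p3 + p12 + p13 + p23 :=
      max_le (max_le (by linarith) (by linarith)) (max_le (by linarith) (by linarith))
    set w : Fin 8 → ℝ :=
      ![1 - p1 - p2 - p3 + p12 + p13 + p23 - t, p3 - p13 - p23 + t, p2 - p12 - p23 + t,
        p23 - t, p1 - p12 - p13 + t, p13 - t, p12 - t, t] with hw
    set e : Fin 8 → (Fin 3 → Bool) :=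
      ![![false, false, false], ![false, false, true], ![false, true, false],
        ![false, true, true], ![true, false, false], ![true, false, true],
        ![true, true, false], ![true, true, true]] with he
    have hw0 : ∀ i ∈ (Finset.univ : Finset (Fin 8)), 0 ≤ w i := by
      intro i _
      fin_cases i
      · show (0:ℝ) ≤ 1 - p1 - p2 - p3 + p12 + p13 + p23 - t; linarith
      · show (0:ℝ) ≤ p3 - p13 - p23 + t; linarith
      · show (0:ℝ) ≤ p2 - p12 - p23 + t; linarith
      · show (0:ℝ) ≤ p23 - t; linarith
      · show (0:ℝ) ≤ p1 - p12 - p13 + t; linarith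
      · show (0:ℝ) ≤ p13 - t; linarith
      · show (0:ℝ) ≤ p12 - t; linarith
      · show (0:ℝ) ≤ t; linarith
    have hw1 : ∑ i : Fin 8, w i = 1 := by
      rw [Fin.sum_univ_eight]
      simp only [hw, v8_0, v8_1, v8_2, v8_3, v8_4, v8_5, v8_6, v8_7]
      ring
    have hmem : ∀ i ∈ (Finset.univ : Finset (Fin 8)),
        bwVertex (e i) ∈ convexHull ℝ (Set.range bwVertex) := fun i _ =>
      subset_convexHull ℝ _ ⟨e i, rfl⟩
    have hsum := (convex_convexHull ℝ (Set.range bwVertex)).sum_mem hw0 hw1 hmem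
    have heq : (∑ i : Fin 8, w i • bwVertex (e i)) = ![p1, p2, p3, p12, p13, p23] := by
      funext j
      rw [Finset.sum_apply]
      rw [Fin.sum_univ_eight]
      fin_cases j <;>
        simp only [Pi.smul_apply, smul_eq_mul, hw, he, bwVertex,
          v8_0, v8_1, v8_2, v8_3, v8_4, v8_5, v8_6, v8_7,
          v6_0, v6_1, v6_2, v6_3, v6_4, v6_5,
          v6m_0, v6m_1, v6m_2, v6m_3, v6m_4, v6m_5,
          v3_0, v3_1, v3_2, bv_true, bv_false] <;> ring
    rwa [heq] at hsum
end

section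
/- (Tree graph representation) Let G be a finite tree (acyclic connected graph) on vertices 1,...,n. Suppose given numbers p_i ∈ [0,1] for each vertex i and p_{ij} for each edge {i,j} of G such that for every edge {i,j}: 0 ≤ p_{ij}, p_{ij} ≤ p_i, p_{ij} ≤ p_j, and p_i + p_j − p_{ij} ≤ 1 (i.e., each pair admits a joint probability distribution on {0,1}^2 with marginals p_i, p_j and joint p_{ij}). Then there exists a probability measure μ on {0,1}^n with μ(x_i = 1) = p_i for all i and μ(x_i = 1, x_j = 1) = p_{ij} for all edges {i,j}. -/
/-!
Remove a leaf `ℓ` of the tree, with neighbour `t`, and represent the smaller tree by induction.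
Then draw `x ℓ` given the other coordinates from a Bernoulli law depending only on
`x t`, with parameters `θ₁ = p_{tℓ} / p_t` and `θ₀ = (p_ℓ - p_{tℓ}) / (1 - p_t)`. This keeps
all marginals of the smaller tree, and the two-point condition on the edge `{t, ℓ}` is exactly
what makes `θ₁, θ₀ ∈ [0, 1]`.
-/

open Finset SimpleGraph

section Representation

variable {V : Type*} [Fintype V] [DecidableEq V]

structure IsRepresentation (G : SimpleGraph V) (p : V → ℝ) (q : V → V → ℝ)
    (μ : (V → Bool) → ℝ) : Prop where
  nonneg : ∀ x, 0 ≤ μ x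
  sum_eq_one : ∑ x, μ x = 1
  marginal : ∀ i, ∑ x with x i = true, μ x = p i
  joint : ∀ i j, G.Adj i j → ∑ x with x i = true ∧ x j = true, μ x = q i j

variable {G : SimpleGraph V} {p : V → ℝ} {q : V → V → ℝ} {μ : (V → Bool) → ℝ}

lemma IsRepresentation.sum_mul_ite (hμ : IsRepresentation G p q μ) (t : V) (a b : ℝ) :
    ∑ x, μ x * (if x t then a else b) = p t * a + (1 - p t) * b := by
  have hnot : ∑ x with ¬x t = true, μ x = 1 - p t := by
    rw [← hμ.sum_eq_one, ← sum_filter_add_sum_filter_not univ (fun x => x t = true), hμ.marginal]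
    ring
  rw [← sum_filter_add_sum_filter_not univ (fun x => x t = true), ← hnot, ← hμ.marginal t,
    sum_mul, sum_mul]
  congr 1 <;> refine sum_congr rfl fun x hx => ?_ <;> simp_all

lemma IsRepresentation.sum_filter_mul_ite (hμ : IsRepresentation G p q μ) (t : V) (a b : ℝ) :
    ∑ x with x t = true, μ x * (if x t then a else b) = p t * a := by
  rw [← hμ.marginal t, sum_mul]
  exact sum_congr rfl fun x hx => by simp_all

end Representation

section Extension

variable {V : Type*} (ℓ : V)

def extendAt (ν θ : ({j // j ≠ ℓ} → Bool) → ℝ) (x : V → Bool) : ℝ :=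
  ν (fun j => x j) * if x ℓ then θ (fun j => x j) else 1 - θ (fun j => x j)

variable {ℓ} in
lemma extendAt_nonneg {ν θ : ({j // j ≠ ℓ} → Bool) → ℝ} (hν : ∀ y, 0 ≤ ν y)
    (hθ : ∀ y, θ y ∈ Set.Icc 0 1) (x : V → Bool) : 0 ≤ extendAt ℓ ν θ x := by
  have := hθ (fun j => x j)
  unfold extendAt
  split_ifs <;> exact mul_nonneg (hν _) (by linarith [this.1, this.2])

variable [DecidableEq V]

lemma Equiv.funSplitAt_symm_apply_self {β : Type*} (s : β) (y : {j // j ≠ ℓ} → β) :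
    (Equiv.funSplitAt ℓ β).symm (s, y) ℓ = s :=
  congrArg Prod.fst ((Equiv.funSplitAt ℓ β).apply_symm_apply (s, y))

lemma Equiv.funSplitAt_symm_restrict {β : Type*} (s : β) (y : {j // j ≠ ℓ} → β) :
    (fun j : {j // j ≠ ℓ} => (Equiv.funSplitAt ℓ β).symm (s, y) j) = y :=
  congrArg Prod.snd ((Equiv.funSplitAt ℓ β).apply_symm_apply (s, y))

variable [Fintype V]

lemma sum_eq_sum_sum_funSplitAt {β M : Type*} [Fintype β] [AddCommMonoid M] (F : (V → β) → M) :
    ∑ x, F x = ∑ y : {j // j ≠ ℓ} → β, ∑ s, F ((Equiv.funSplitAt ℓ β).symm (s, y)) := by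
  rw [← (Equiv.funSplitAt ℓ β).symm.sum_comp, Fintype.sum_prod_type, sum_comm]

variable {ℓ} (ν θ : ({j // j ≠ ℓ} → Bool) → ℝ)

lemma sum_filter_extendAt_restrict (P : ({j // j ≠ ℓ} → Bool) → Prop) [DecidablePred P] :
    ∑ x with P (fun j => x j), extendAt ℓ ν θ x = ∑ y with P y, ν y := by
  rw [sum_filter, sum_filter, sum_eq_sum_sum_funSplitAt ℓ]
  refine sum_congr rfl fun y _ => ?_
  simp only [extendAt, Fintype.sum_bool, Equiv.funSplitAt_symm_restrict,
    Equiv.funSplitAt_symm_apply_self, if_true, Bool.false_eq_true, if_false]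
  split_ifs <;> ring

lemma sum_filter_extendAt_leaf (P : ({j // j ≠ ℓ} → Bool) → Prop) [DecidablePred P] :
    ∑ x with x ℓ = true ∧ P (fun j => x j), extendAt ℓ ν θ x = ∑ y with P y, ν y * θ y := by
  rw [sum_filter, sum_filter, sum_eq_sum_sum_funSplitAt ℓ]
  refine sum_congr rfl fun y _ => ?_
  simp only [extendAt, Fintype.sum_bool, Equiv.funSplitAt_symm_restrict,
    Equiv.funSplitAt_symm_apply_self, true_and, if_true, Bool.false_eq_true, false_and, if_false,
    add_zero]

lemma sum_extendAt : ∑ x, extendAt ℓ ν θ x = ∑ y, ν y := by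
  simpa using sum_filter_extendAt_restrict ν θ fun _ => True

lemma sum_filter_extendAt_self : ∑ x with x ℓ = true, extendAt ℓ ν θ x = ∑ y, ν y * θ y := by
  simpa using sum_filter_extendAt_leaf ν θ fun _ => True

end Extension

/-- The junk values `x / 0 = 0` are harmless: `a = 0` forces `c = 0`, and `a = 1` forces `b = c`. -/
lemma exists_kernel_of_joint {a b c : ℝ} (hc : 0 ≤ c) (hca : c ≤ a) (hcb : c ≤ b)
    (habc : a + b - c ≤ 1) :
    ∃ θ₁ ∈ Set.Icc (0 : ℝ) 1, ∃ θ₀ ∈ Set.Icc (0 : ℝ) 1,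
      a * θ₁ = c ∧ a * θ₁ + (1 - a) * θ₀ = b := by
  have h₁ : a * (c / a) = c := mul_div_cancel_of_imp' fun ha => by linarith
  have h₀ : (1 - a) * ((b - c) / (1 - a)) = b - c := mul_div_cancel_of_imp' fun ha => by linarith
  refine ⟨c / a, ⟨div_nonneg hc (hc.trans hca), div_le_one_of_le₀ hca (hc.trans hca)⟩,
    (b - c) / (1 - a), ⟨div_nonneg (by linarith) (by linarith),
      div_le_one_of_le₀ (by linarith) (by linarith)⟩, h₁, by rw [h₁, h₀]; ring⟩

lemma SimpleGraph.IsTree.comap_subtype_ne {V : Type*} {G : SimpleGraph V} (hG : G.IsTree) {ℓ : V}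
    [Fintype (G.neighborSet ℓ)] (h : G.degree ℓ = 1) :
    (G.comap (Function.Embedding.subtype (· ≠ ℓ))).IsTree :=
  ⟨hG.connected.induce_compl_singleton_of_degree_eq_one h, hG.isAcyclic.of_comap _⟩

section Induction

variable {V : Type*} [Fintype V] [DecidableEq V] {G : SimpleGraph V} {p : V → ℝ} {q : V → V → ℝ}

lemma isRepresentation_extendAt_of_subsingleton [Subsingleton V] (ℓ : V)
    (hp : p ℓ ∈ Set.Icc 0 1) :
    IsRepresentation G p q (extendAt ℓ (fun _ => 1) fun _ => p ℓ) := by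
  have : IsEmpty {j // j ≠ ℓ} := ⟨fun j => j.2 (Subsingleton.elim _ _)⟩
  refine ⟨extendAt_nonneg (fun _ => zero_le_one) fun _ => hp, ?_, fun i => ?_,
    fun i j hij => (G.ne_of_adj hij (Subsingleton.elim i j)).elim⟩
  · simp [sum_extendAt]
  · obtain rfl := Subsingleton.elim i ℓ
    simp [sum_filter_extendAt_self]

lemma IsRepresentation.extendAt_leaf {ℓ : V} {t : {j // j ≠ ℓ}} (hℓ : ∀ u, G.Adj ℓ u → u = t)
    {ν : ({j // j ≠ ℓ} → Bool) → ℝ}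
    (hν : IsRepresentation (G.comap (Function.Embedding.subtype (· ≠ ℓ))) (fun i => p i)
      (fun i j => q i j) ν)
    {θ₁ θ₀ : ℝ} (hθ₁ : θ₁ ∈ Set.Icc 0 1) (hθ₀ : θ₀ ∈ Set.Icc 0 1) (hjoint : p t * θ₁ = q t ℓ)
    (hsymm : q ℓ t = q t ℓ) (hmarg : p t * θ₁ + (1 - p t) * θ₀ = p ℓ) :
    IsRepresentation G p q (extendAt ℓ ν fun y => if y t then θ₁ else θ₀) := by
  have hleaf : ∑ x with x ℓ = true ∧ x t = true, extendAt ℓ ν (fun y => if y t then θ₁ else θ₀) x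
      = q t ℓ := by
    rw [sum_filter_extendAt_leaf ν _ fun y => y t = true, hν.sum_filter_mul_ite, hjoint]
  refine ⟨extendAt_nonneg hν.nonneg fun y => ?_, ?_, fun i => ?_, fun i j hij => ?_⟩
  · split_ifs <;> assumption
  · rw [sum_extendAt, hν.sum_eq_one]
  · by_cases hi : i = ℓ
    · subst hi
      rw [sum_filter_extendAt_self, hν.sum_mul_ite, hmarg]
    · exact (sum_filter_extendAt_restrict ν _ fun y => y ⟨i, hi⟩ = true).trans
        (hν.marginal ⟨i, hi⟩)
  · by_cases hi : i = ℓ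
    · subst hi
      obtain rfl := hℓ j hij
      rw [hleaf, hsymm]
    by_cases hj : j = ℓ
    · subst hj
      obtain rfl := hℓ i hij.symm
      simpa only [and_comm] using hleaf
    exact (sum_filter_extendAt_restrict ν _ fun y => y ⟨i, hi⟩ = true ∧ y ⟨j, hj⟩ = true).trans
      (hν.joint ⟨i, hi⟩ ⟨j, hj⟩ hij)

end Induction

theorem exists_isRepresentation_of_isTree {V : Type*} [Fintype V] [DecidableEq V]
    {G : SimpleGraph V} (hG : G.IsTree) {p : V → ℝ} {q : V → V → ℝ} (hp : ∀ i, p i ∈ Set.Icc 0 1)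
    (hsymm : ∀ i j, G.Adj i j → q i j = q j i)
    (hq : ∀ i j, G.Adj i j → 0 ≤ q i j ∧ q i j ≤ p i ∧ q i j ≤ p j ∧ p i + p j - q i j ≤ 1) :
    ∃ μ, IsRepresentation G p q μ := by
  obtain ⟨n, hn⟩ : ∃ n, Fintype.card V = n := ⟨_, rfl⟩
  induction n using Nat.strong_induction_on generalizing V with | _ n IH =>
  rcases subsingleton_or_nontrivial V with _ | _
  · obtain ⟨ℓ⟩ := hG.nonempty
    exact ⟨_, isRepresentation_extendAt_of_subsingleton ℓ (hp ℓ)⟩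
  classical
  obtain ⟨ℓ, hdeg⟩ := hG.exists_vert_degree_one_of_nontrivial
  obtain ⟨t, hℓt, ht⟩ := degree_eq_one_iff_existsUnique_adj.1 hdeg
  obtain ⟨ν, hν⟩ := IH _ (hn ▸ Fintype.card_subtype_lt (p := (· ≠ ℓ)) (not_not.2 rfl))
    (hG.comap_subtype_ne hdeg) (fun i => hp i) (fun i j => hsymm i j) (fun i j => hq i j) rfl
  obtain ⟨hc, hct, hcl, hle⟩ := hq t ℓ hℓt.symm
  obtain ⟨θ₁, hθ₁, θ₀, hθ₀, hjoint, hmarg⟩ := exists_kernel_of_joint hc hct hcl hle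
  exact ⟨_, hν.extendAt_leaf (t := ⟨t, hℓt.ne.symm⟩) ht hθ₁ hθ₀ hjoint (hsymm ℓ t hℓt) hmarg⟩

/-- Tree graph representation: given a finite tree `G` on `{1,…,n}`,
single probabilities `p_i ∈ [0,1]` and, for each edge `{i,j}`, a joint value `p_{ij}`
satisfying `0 ≤ p_{ij} ≤ min(p_i, p_j)` and `p_i + p_j − p_{ij} ≤ 1`, there is a
probability measure on `{0,1}^n` with the prescribed singleton marginals and the
prescribed pairwise joints on the edges. -/
theorem tree_graph_representation (n : ℕ) (G : SimpleGraph (Fin n))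
    (hG : G.IsTree)
    (p : Fin n → ℝ) (q : Fin n → Fin n → ℝ)
    (hp : ∀ i, 0 ≤ p i ∧ p i ≤ 1)
    (hsymm : ∀ i j, G.Adj i j → q i j = q j i)
    (hq : ∀ i j, G.Adj i j →
      0 ≤ q i j ∧ q i j ≤ p i ∧ q i j ≤ p j ∧ p i + p j - q i j ≤ 1) :
    ∃ μ : (Fin n → Bool) → ℝ,
      (∀ x, 0 ≤ μ x) ∧
      (∑ x : Fin n → Bool, μ x) = 1 ∧
      (∀ i, (∑ x ∈ Finset.univ.filter (fun x : Fin n → Bool => x i = true), μ x) = p i) ∧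
      (∀ i j, G.Adj i j →
        (∑ x ∈ Finset.univ.filter
            (fun x : Fin n → Bool => x i = true ∧ x j = true), μ x) = q i j) := by
  obtain ⟨μ, hμ⟩ := exists_isRepresentation_of_isTree hG hp hsymm hq
  exact ⟨μ, hμ.nonneg, hμ.sum_eq_one, hμ.marginal, hμ.joint⟩
end

section
/- (Fourier–Motzkin soundness and completeness for one variable) Let A x ≤ b be a finite system of m linear inequalities in variables x_1,...,x_d over ℝ. Partition the inequality indices into I_+ = {i : a_{id} > 0}, I_− = {i : a_{id} < 0}, I_0 = {i : a_{id} = 0}. The system obtained by taking, for each pair (i,j) ∈ I_+ × I_−, the inequality (after normalizing coefficients of x_d to ±1) formed by summing inequality i and inequality j, together with all inequalities in I_0, describes exactly the projection of the solution set {x : Ax ≤ b} onto the coordinates (x_1,...,x_{d−1}). In particular, Ax ≤ b has a solution if and only if the eliminated system has a solution. -/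
private lemma fm_split {d : ℕ} (u v y : Fin d → ℝ) (c e : ℝ) :
    ∑ k, (u k / c - v k / e) * y k
      = (∑ k, u k * y k) / c - (∑ k, v k * y k) / e := by
  simp [sub_mul, Finset.sum_sub_distrib, div_mul_eq_mul_div, Finset.sum_div]

private lemma fm_sum_snoc {m d : ℕ} (a : Fin m → Fin (d + 1) → ℝ)
    (i : Fin m) (y : Fin d → ℝ) (t : ℝ) :
    (∑ k : Fin (d + 1), a i k * (Fin.snoc y t : Fin (d + 1) → ℝ) k)
      = (∑ k : Fin d, a i k.castSucc * y k) + a i (Fin.last d) * t := by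
  rw [Fin.sum_univ_castSucc]
  simp

/-- Fourier–Motzkin, soundness and completeness for one variable:
for a system `∑_j a i j * x j ≤ b i` in `d+1` variables, the system obtained by
keeping the inequalities not involving the last variable and, for each pair with
positive/negative coefficient on the last variable, adding the two inequalities
normalized so the last coefficient is `±1`, describes exactly the projection of the
solution set onto the first `d` coordinates; in particular the original system is
solvable iff the eliminated one is. -/
theorem fourierMotzkin_one_variable (m d : ℕ)
    (a : Fin m → Fin (d + 1) → ℝ) (b : Fin m → ℝ) :
    ({y : Fin d → ℝ |
        (∀ i, a i (Fin.last d) = 0 → (∑ k : Fin d, a i k.castSucc * y k) ≤ b i) ∧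
        (∀ i j, 0 < a i (Fin.last d) → a j (Fin.last d) < 0 →
          (∑ k : Fin d,
              (a i k.castSucc / a i (Fin.last d) - a j k.castSucc / a j (Fin.last d)) * y k)
            ≤ b i / a i (Fin.last d) - b j / a j (Fin.last d))} =
      {y : Fin d → ℝ | ∃ t : ℝ,
        ∀ i, (∑ k : Fin (d + 1), a i k * (Fin.snoc y t : Fin (d + 1) → ℝ) k) ≤ b i}) ∧
    ((∃ x : Fin (d + 1) → ℝ, ∀ i, (∑ k, a i k * x k) ≤ b i) ↔
      (∃ y : Fin d → ℝ,
        (∀ i, a i (Fin.last d) = 0 → (∑ k : Fin d, a i k.castSucc * y k) ≤ b i) ∧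
        (∀ i j, 0 < a i (Fin.last d) → a j (Fin.last d) < 0 →
          (∑ k : Fin d,
              (a i k.castSucc / a i (Fin.last d) - a j k.castSucc / a j (Fin.last d)) * y k)
            ≤ b i / a i (Fin.last d) - b j / a j (Fin.last d)))) := by
  have hmain : ({y : Fin d → ℝ |
        (∀ i, a i (Fin.last d) = 0 → (∑ k : Fin d, a i k.castSucc * y k) ≤ b i) ∧
        (∀ i j, 0 < a i (Fin.last d) → a j (Fin.last d) < 0 →
          (∑ k : Fin d,
              (a i k.castSucc / a i (Fin.last d) - a j k.castSucc / a j (Fin.last d)) * y k)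
            ≤ b i / a i (Fin.last d) - b j / a j (Fin.last d))} =
      {y : Fin d → ℝ | ∃ t : ℝ,
        ∀ i, (∑ k : Fin (d + 1), a i k * (Fin.snoc y t : Fin (d + 1) → ℝ) k) ≤ b i}) := by
    ext y
    simp only [Set.mem_setOf_eq]
    constructor
    · rintro ⟨h0, hpn⟩
      -- pairwise compatibility of bounds
      have key : ∀ i j, 0 < a i (Fin.last d) → a j (Fin.last d) < 0 →
          (b j - ∑ k : Fin d, a j k.castSucc * y k) / a j (Fin.last d)
            ≤ (b i - ∑ k : Fin d, a i k.castSucc * y k) / a i (Fin.last d) := by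
        intro i j hi hj
        have h := hpn i j hi hj
        rw [fm_split] at h
        rw [sub_div, sub_div]
        linarith
      set P : Finset (Fin m) := Finset.univ.filter (fun i => 0 < a i (Fin.last d)) with hP
      set N : Finset (Fin m) := Finset.univ.filter (fun i => a i (Fin.last d) < 0) with hN
      have hmemP : ∀ i, 0 < a i (Fin.last d) → i ∈ P := by
        intro i hi; simp [hP, hi]
      have hmemN : ∀ i, a i (Fin.last d) < 0 → i ∈ N := by
        intro i hi; simp [hN, hi]
      by_cases hPne : P.Nonempty
      · refine ⟨P.inf' hPne (fun i => (b i - ∑ k : Fin d, a i k.castSucc * y k) / a i (Fin.last d)), ?_⟩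
        intro i
        rw [fm_sum_snoc]
        rcases lt_trichotomy (a i (Fin.last d)) 0 with hi | hi | hi
        · -- negative: use that inf' is attained at some i0 ∈ P
          obtain ⟨i0, hi0P, hi0⟩ := Finset.exists_mem_eq_inf' hPne
            (fun i => (b i - ∑ k : Fin d, a i k.castSucc * y k) / a i (Fin.last d))
          have hi0pos : 0 < a i0 (Fin.last d) := by
            simpa [hP] using hi0P
          have hk := key i0 i hi0pos hi
          rw [← hi0] at hk
          -- t ≥ (b i - s i)/a i, a i < 0 ⇒ a i * t ≤ b i - s i
          have := (div_le_iff_of_neg hi).mp hk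
          linarith
        · rw [hi]; simpa using h0 i hi
        · have hiP : i ∈ P := hmemP i hi
          have := Finset.inf'_le (fun i => (b i - ∑ k : Fin d, a i k.castSucc * y k) / a i (Fin.last d)) hiP
          have := (le_div_iff₀ hi).mp this
          linarith
      · by_cases hNne : N.Nonempty
        · refine ⟨N.sup' hNne (fun i => (b i - ∑ k : Fin d, a i k.castSucc * y k) / a i (Fin.last d)), ?_⟩
          intro i
          rw [fm_sum_snoc]
          rcases lt_trichotomy (a i (Fin.last d)) 0 with hi | hi | hi
          · have := Finset.le_sup' (fun i => (b i - ∑ k : Fin d, a i k.castSucc * y k) / a i (Fin.last d)) (hmemN i hi)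
            have := (div_le_iff_of_neg hi).mp this
            linarith
          · rw [hi]; simpa using h0 i hi
          · exact absurd (hmemP i hi) (by simp [Finset.not_nonempty_iff_eq_empty.mp hPne])
        · refine ⟨0, ?_⟩
          intro i
          rw [fm_sum_snoc]
          have hi : a i (Fin.last d) = 0 := by
            rcases lt_trichotomy (a i (Fin.last d)) 0 with h | h | h
            · exact absurd (hmemN i h) (by simp [Finset.not_nonempty_iff_eq_empty.mp hNne])
            · exact h
            · exact absurd (hmemP i h) (by simp [Finset.not_nonempty_iff_eq_empty.mp hPne])
          rw [hi]; simpa using h0 i hi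
    · rintro ⟨t, ht⟩
      constructor
      · intro i hi
        have := ht i
        rw [fm_sum_snoc, hi] at this
        linarith
      · intro i j hi hj
        have h1 := ht i
        have h2 := ht j
        rw [fm_sum_snoc] at h1 h2
        rw [fm_split]
        have e1 : (∑ k : Fin d, a i k.castSucc * y k) / a i (Fin.last d)
            ≤ b i / a i (Fin.last d) - t := by
          have : (∑ k : Fin d, a i k.castSucc * y k) ≤ b i - a i (Fin.last d) * t := by linarith
          have h3 := (div_le_div_iff_of_pos_right hi).mpr this
          rwa [sub_div, mul_div_cancel_left₀ _ hi.ne'] at h3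
        have e2 : b j / a j (Fin.last d) - t
            ≤ (∑ k : Fin d, a j k.castSucc * y k) / a j (Fin.last d) := by
          have h4 : (∑ k : Fin d, a j k.castSucc * y k) ≤ b j - a j (Fin.last d) * t := by linarith
          have h5 := div_le_div_of_nonpos_of_le hj.le h4
          rwa [sub_div, mul_div_cancel_left₀ _ hj.ne] at h5
        linarith
  refine ⟨hmain, ?_⟩
  constructor
  · rintro ⟨x, hx⟩
    have hx' : (Fin.snoc (fun k : Fin d => x k.castSucc) (x (Fin.last d)) : Fin (d+1) → ℝ) = x := by
      funext k
      induction k using Fin.lastCases with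
      | last => simp
      | cast k => simp
    have : (fun k : Fin d => x k.castSucc) ∈
        {y : Fin d → ℝ | ∃ t : ℝ,
          ∀ i, (∑ k : Fin (d + 1), a i k * (Fin.snoc y t : Fin (d + 1) → ℝ) k) ≤ b i} := by
      exact ⟨x (Fin.last d), by rw [hx']; exact hx⟩
    rw [← hmain] at this
    exact ⟨_, this⟩
  · rintro ⟨y, hy⟩
    have : y ∈ ({y : Fin d → ℝ |
        (∀ i, a i (Fin.last d) = 0 → (∑ k : Fin d, a i k.castSucc * y k) ≤ b i) ∧
        (∀ i j, 0 < a i (Fin.last d) → a j (Fin.last d) < 0 →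
          (∑ k : Fin d,
              (a i k.castSucc / a i (Fin.last d) - a j k.castSucc / a j (Fin.last d)) * y k)
            ≤ b i / a i (Fin.last d) - b j / a j (Fin.last d))}) := hy
    rw [hmain] at this
    obtain ⟨t, ht⟩ := this
    exact ⟨Fin.snoc y t, ht⟩
end

section
/- (Bipartite (2,n) Bell polytope) Let n ≥ 2. A vector (p_1, p_2, q_3,...,q_{n+2}, (p_{is})_{i∈{1,2}, s∈{3,...,n+2}}) lies in the convex hull of the vectors (ε_1, ε_2, ε_3,...,ε_{n+2}, (ε_iε_s)) over ε ∈ {0,1}^{n+2} if and only if it satisfies: 0 ≤ p_{is} ≤ min(p_i, q_s), p_i + q_s − p_{is} ≤ 1 for all i ∈ {1,2}, s ∈ {3,...,n+2}, and for every pair s < t in {3,...,n+2} the eight CHSH inequalities −1 ≤ p_{is} + p_{it} + p_{jt} − p_{js} − p_i − q_t ≤ 0 for {i,j} = {1,2} and the analogous ones with s,t swapped. -/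
/-- Alice's observables among the `n+2` observables: indices `1, 2`. -/
def aliceIdx (n : ℕ) (i : Fin 2) : Fin (n + 2) := i.castLE (by omega)

/-- Bob's observables among the `n+2` observables: indices `3, …, n+2`. -/
def bobIdx (n : ℕ) (s : Fin n) : Fin (n + 2) := ⟨s.1 + 2, by omega⟩

/-- Vertex of the bipartite `(2,n)` correlation polytope: the truth-table row
`(ε₁, …, ε_{n+2}, (ε_i ε_s)_{i ≤ 2, s ≥ 3})`. -/
noncomputable def bell2nVertex (n : ℕ) (ε : Fin (n + 2) → Bool) :
    (Fin (n + 2) ⊕ Fin 2 × Fin n) → ℝ :=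
  Sum.elim (fun i => bv (ε i))
    (fun is => bv (ε (aliceIdx n is.1)) * bv (ε (bobIdx n is.2)))

open Finset Set

section ProductDistribution

variable {ι β R : Type*} [Fintype ι] [DecidableEq ι] [Fintype β] [CommSemiring R]
  {κ : ι → β → R}

theorem sum_pi_prod_eq_one (hκ : ∀ i, ∑ j, κ i j = 1) : ∑ c : ι → β, ∏ i, κ i (c i) = 1 := by
  rw [← Fintype.prod_sum]
  simp [hκ]

theorem sum_pi_prod_mul_apply (hκ : ∀ i, ∑ j, κ i j = 1) (t : ι) (g : β → R) :
    ∑ c : ι → β, (∏ i, κ i (c i)) * g (c t) = ∑ j, κ t j * g j := by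
  have hfactor : ∀ c : ι → β,
      (∏ i, κ i (c i)) * g (c t) = ∏ i, κ i (c i) * if i = t then g (c i) else 1 := by
    intro c
    rw [prod_mul_distrib, prod_ite_eq' univ t, if_pos (Finset.mem_univ t)]
  simp_rw [hfactor]
  rw [← Fintype.prod_sum fun i j => κ i j * if i = t then g j else 1,
    prod_eq_single t (fun i _ hi => by simp [hi, hκ]) (by simp)]
  simp

end ProductDistribution

section ConditionalCoupling

variable {α ι β : Type*} [Fintype ι]

/-- The law of `(A, C)` with `A ∼ m` and `(A, C i) ∼ x i`, the `C i` being conditionally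
independent given `A`; where `m a = 0`, division by zero yields the correct weight `0`. -/
noncomputable def condIndepCoupling (m : α → ℝ) (x : ι → α → β → ℝ) (ac : α × (ι → β)) : ℝ :=
  m ac.1 * ∏ i, x i ac.1 (ac.2 i) / m ac.1

variable {m : α → ℝ} {x : ι → α → β → ℝ}

theorem condIndepCoupling_nonneg (hm : ∀ a, 0 ≤ m a) (hx : ∀ i a j, 0 ≤ x i a j)
    (ac : α × (ι → β)) : 0 ≤ condIndepCoupling m x ac :=
  mul_nonneg (hm _) (prod_nonneg fun _ _ => div_nonneg (hx _ _ _) (hm _))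

variable [Fintype α] [DecidableEq ι] [Fintype β]

theorem sum_condIndepCoupling_mul_fst (hmx : ∀ i a, ∑ j, x i a j = m a) (f : α → ℝ) :
    ∑ ac, condIndepCoupling m x ac * f ac.1 = ∑ a, m a * f a := by
  rw [Fintype.sum_prod_type]
  refine sum_congr rfl fun a _ => ?_
  rcases eq_or_ne (m a) 0 with h | h
  · simp [condIndepCoupling, h]
  · simp_rw [condIndepCoupling, mul_assoc, ← mul_sum, ← sum_mul]
    rw [sum_pi_prod_eq_one (κ := fun i j => x i a j / m a)
      fun i => by rw [← sum_div, hmx, div_self h], one_mul]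

theorem sum_condIndepCoupling_mul_fst_mul_apply (hmx : ∀ i a, ∑ j, x i a j = m a)
    (hx : ∀ i a j, 0 ≤ x i a j) (f : α → ℝ) (t : ι) (g : β → ℝ) :
    ∑ ac, condIndepCoupling m x ac * (f ac.1 * g (ac.2 t)) = ∑ a, f a * ∑ j, x t a j * g j := by
  rw [Fintype.sum_prod_type]
  refine sum_congr rfl fun a _ => ?_
  rcases eq_or_ne (m a) 0 with h | h
  · have hzero : ∀ j, x t a j = 0 := fun j =>
      (sum_eq_zero_iff_of_nonneg fun j _ => hx t a j).1 (by rw [hmx, h]) j (mem_univ j)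
    simp [condIndepCoupling, h, hzero]
  · have hcond : ∀ i, ∑ j, x i a j / m a = 1 := fun i => by rw [← sum_div, hmx, div_self h]
    calc ∑ c, condIndepCoupling m x (a, c) * (f a * g (c t))
        = m a * f a * ∑ c : ι → β, (∏ i, x i a (c i) / m a) * g (c t) := by
          simp_rw [condIndepCoupling, mul_sum]
          exact sum_congr rfl fun c _ => by ring
      _ = f a * ∑ j, x t a j * g j := by
          rw [sum_pi_prod_mul_apply (κ := fun i j => x i a j / m a) hcond, mul_sum, mul_sum]
          exact sum_congr rfl fun j _ => by field_simp

end ConditionalCoupling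

def IsPairCorrelation (p q r : ℝ) : Prop :=
  0 ≤ r ∧ r ≤ p ∧ r ≤ q ∧ p + q - r ≤ 1

noncomputable def pairDist (p₁ p₂ r : ℝ) : Bool × Bool → ℝ
  | (true, true) => r
  | (true, false) => p₁ - r
  | (false, true) => p₂ - r
  | (false, false) => 1 - p₁ - p₂ + r

theorem pairDist_nonneg {p₁ p₂ r : ℝ} (h : IsPairCorrelation p₁ p₂ r) (a : Bool × Bool) :
    0 ≤ pairDist p₁ p₂ r a := by
  obtain ⟨h₀, h₁, h₂, h₃⟩ := h
  rcases a with ⟨_ | _, _ | _⟩ <;> simp only [pairDist] <;> linarith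

/-- The distributions of three bits with `P(A₁) = p₁`, `P(A₂) = p₂`, `P(C) = q`,
`P(A₁A₂) = r`, `P(A₁C) = u`, `P(A₂C) = v` form the segment parametrised by `w = P(A₁A₂C)`. -/
noncomputable def tripleDist (p₁ p₂ q r u v w : ℝ) : Bool × Bool → Bool → ℝ
  | (true, true), true => w
  | (true, true), false => r - w
  | (true, false), true => u - w
  | (true, false), false => p₁ - r - u + w
  | (false, true), true => v - w
  | (false, true), false => p₂ - r - v + w
  | (false, false), true => q - u - v + w
  | (false, false), false => 1 - p₁ - p₂ - q + r + u + v - w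

theorem sum_tripleDist (p₁ p₂ q r u v w : ℝ) (a : Bool × Bool) :
    ∑ c, tripleDist p₁ p₂ q r u v w a c = pairDist p₁ p₂ r a := by
  rcases a with ⟨_ | _, _ | _⟩ <;> simp only [Fintype.sum_bool, tripleDist, pairDist] <;> ring

theorem exists_tripleDist_nonneg {p₁ p₂ q r u v : ℝ} (hr : IsPairCorrelation p₁ p₂ r)
    (hu : IsPairCorrelation p₁ q u) (hv : IsPairCorrelation p₂ q v)
    (h₁ : r + u - v ≤ p₁) (h₂ : r + v - u ≤ p₂) (h₃ : u + v - r ≤ q)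
    (h₀ : p₁ + p₂ + q - r - u - v ≤ 1) :
    ∃ w, ∀ a c, 0 ≤ tripleDist p₁ p₂ q r u v w a c := by
  obtain ⟨hr₀, hr₁, hr₂, hr₃⟩ := hr
  obtain ⟨hu₀, hu₁, hu₂, hu₃⟩ := hu
  obtain ⟨hv₀, hv₁, hv₂, hv₃⟩ := hv
  have hbetween : ∀ x ∈ ({0, r + u - p₁, r + v - p₂, u + v - q} : Set ℝ),
      ∀ y ∈ ({r, u, v, 1 - p₁ - p₂ - q + r + u + v} : Set ℝ), x ≤ y := by
    simp only [mem_insert_iff, mem_singleton_iff]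
    rintro _ (rfl | rfl | rfl | rfl) _ (rfl | rfl | rfl | rfl) <;> linarith
  obtain ⟨w, hlo, hhi⟩ :=
    exists_between_of_forall_le (insert_nonempty _ _) (insert_nonempty _ _) hbetween
  simp only [upperBounds_insert, upperBounds_singleton, lowerBounds_insert,
    lowerBounds_singleton, mem_inter_iff, Set.mem_Ici, Set.mem_Iic] at hlo hhi
  refine ⟨w, ?_⟩
  rintro ⟨_ | _, _ | _⟩ (_ | _) <;> simp only [tripleDist] <;> linarith

theorem exists_alice_correlation {ι : Type*} [Nonempty ι] {p₁ p₂ : ℝ} {q u v : ι → ℝ}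
    (hu : ∀ s, IsPairCorrelation p₁ (q s) (u s)) (hv : ∀ s, IsPairCorrelation p₂ (q s) (v s))
    (hchsh₁ : ∀ s t, s ≠ t → -1 ≤ u s + u t + v t - v s - p₁ - q t ∧
      u s + u t + v t - v s - p₁ - q t ≤ 0)
    (hchsh₂ : ∀ s t, s ≠ t → -1 ≤ v s + v t + u t - u s - p₂ - q t ∧
      v s + v t + u t - u s - p₂ - q t ≤ 0) :
    ∃ r, IsPairCorrelation p₁ p₂ r ∧ ∀ s, r + u s - v s ≤ p₁ ∧ r + v s - u s ≤ p₂ ∧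
      u s + v s - r ≤ q s ∧ p₁ + p₂ + q s - r - u s - v s ≤ 1 := by
  set lower : ι → ℝ := fun s =>
    max (max 0 (p₁ + p₂ - 1)) (max (u s + v s - q s) (p₁ + p₂ + q s - u s - v s - 1))
  set upper : ι → ℝ := fun t => min (min p₁ p₂) (min (p₁ - u t + v t) (p₂ + u t - v t))
  have hbetween : ∀ x ∈ range lower, ∀ y ∈ range upper, x ≤ y := by
    rintro _ ⟨s, rfl⟩ _ ⟨t, rfl⟩
    obtain ⟨hus₀, hus₁, hus₂, hus₃⟩ := hu s
    obtain ⟨hvs₀, hvs₁, hvs₂, hvs₃⟩ := hv s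
    obtain ⟨hut₀, hut₁, hut₂, hut₃⟩ := hu t
    obtain ⟨hvt₀, hvt₁, hvt₂, hvt₃⟩ := hv t
    simp only [lower, upper, max_le_iff, le_min_iff]
    rcases eq_or_ne t s with rfl | hts
    · split_ands <;> linarith
    · obtain ⟨h₁, h₁'⟩ := hchsh₁ t s hts
      obtain ⟨h₂, h₂'⟩ := hchsh₂ t s hts
      split_ands <;> linarith
  obtain ⟨r, hlo, hhi⟩ :=
    exists_between_of_forall_le (range_nonempty _) (range_nonempty _) hbetween
  have hlo' : ∀ s, lower s ≤ r := fun s => hlo (mem_range_self s)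
  have hhi' : ∀ s, r ≤ upper s := fun s => hhi (mem_range_self s)
  simp only [lower, upper, max_le_iff, le_min_iff] at hlo' hhi'
  obtain ⟨s₀⟩ := ‹Nonempty ι›
  refine ⟨r, ⟨(hlo' s₀).1.1, (hhi' s₀).1.1, (hhi' s₀).1.2, by linarith [(hlo' s₀).1.2]⟩,
    fun s => ⟨?_, ?_, ?_, ?_⟩⟩
  all_goals linarith [hlo' s, hhi' s]

def Bell2nIneqs (n : ℕ) (p : (Fin (n + 2) ⊕ Fin 2 × Fin n) → ℝ) : Prop :=
  (∀ (i : Fin 2) (s : Fin n), IsPairCorrelation (p (.inl (aliceIdx n i)))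
      (p (.inl (bobIdx n s))) (p (.inr (i, s)))) ∧
    ∀ s t : Fin n, s ≠ t → ∀ i j : Fin 2, i ≠ j →
      -1 ≤ p (.inr (i, s)) + p (.inr (i, t)) + p (.inr (j, t)) - p (.inr (j, s))
        - p (.inl (aliceIdx n i)) - p (.inl (bobIdx n t)) ∧
      p (.inr (i, s)) + p (.inr (i, t)) + p (.inr (j, t)) - p (.inr (j, s))
        - p (.inl (aliceIdx n i)) - p (.inl (bobIdx n t)) ≤ 0

theorem convex_setOf_bell2nIneqs (n : ℕ) : Convex ℝ {p | Bell2nIneqs n p} := by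
  rintro p ⟨hp, hp'⟩ q ⟨hq, hq'⟩ a b ha hb hab
  refine ⟨fun i s => ?_, fun s t hst i j hij => ?_⟩
  · obtain ⟨_, _, _, _⟩ := hp i s
    obtain ⟨_, _, _, _⟩ := hq i s
    simp only [IsPairCorrelation, Pi.add_apply, Pi.smul_apply, smul_eq_mul]
    split_ands <;> nlinarith
  · obtain ⟨_, _⟩ := hp' s t hst i j hij
    obtain ⟨_, _⟩ := hq' s t hst i j hij
    simp only [Pi.add_apply, Pi.smul_apply, smul_eq_mul]
    split_ands <;> nlinarith

theorem bell2nIneqs_bell2nVertex (n : ℕ) (ε : Fin (n + 2) → Bool) :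
    Bell2nIneqs n (bell2nVertex n ε) := by
  refine ⟨fun i s => ?_, fun s t _ i j _ => ?_⟩ <;>
    simp only [IsPairCorrelation, bell2nVertex, Sum.elim_inl, Sum.elim_inr]
  · generalize ε (aliceIdx n i) = x
    generalize ε (bobIdx n s) = y
    cases x <;> cases y <;> norm_num [bv]
  · generalize ε (aliceIdx n i) = x
    generalize ε (aliceIdx n j) = x'
    generalize ε (bobIdx n s) = y
    generalize ε (bobIdx n t) = y'
    cases x <;> cases x' <;> cases y <;> cases y' <;> norm_num [bv]

theorem mem_convexHull_bell2nVertex_of_law {n : ℕ} {p : (Fin (n + 2) ⊕ Fin 2 × Fin n) → ℝ}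
    {μ : (Bool × Bool) × (Fin n → Bool) → ℝ} (hμ₀ : ∀ ac, 0 ≤ μ ac) (hμ₁ : ∑ ac, μ ac = 1)
    (h₁ : ∑ ac, μ ac * bv ac.1.1 = p (.inl (aliceIdx n 0)))
    (h₂ : ∑ ac, μ ac * bv ac.1.2 = p (.inl (aliceIdx n 1)))
    (hq : ∀ s, ∑ ac, μ ac * bv (ac.2 s) = p (.inl (bobIdx n s)))
    (hu : ∀ s, ∑ ac, μ ac * (bv ac.1.1 * bv (ac.2 s)) = p (.inr (0, s)))
    (hv : ∀ s, ∑ ac, μ ac * (bv ac.1.2 * bv (ac.2 s)) = p (.inr (1, s))) :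
    p ∈ convexHull ℝ (range (bell2nVertex n)) := by
  have hp : ∑ ac, μ ac • bell2nVertex n (Fin.cons ac.1.1 (Fin.cons ac.1.2 ac.2)) = p := by
    funext k
    simp only [Finset.sum_apply, Pi.smul_apply, smul_eq_mul]
    rcases k with k | ⟨i, s⟩
    · refine Fin.cases h₁ (Fin.cases h₂ fun s => hq s) k
    · fin_cases i
      exacts [hu s, hv s]
  rw [← hp]
  exact (convex_convexHull ℝ _).sum_mem (fun ac _ => hμ₀ ac) hμ₁
    fun ac _ => subset_convexHull ℝ _ (mem_range_self _)

theorem mem_convexHull_of_bell2nIneqs {n : ℕ} (hn : 0 < n)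
    {p : (Fin (n + 2) ⊕ Fin 2 × Fin n) → ℝ} (hp : Bell2nIneqs n p) :
    p ∈ convexHull ℝ (range (bell2nVertex n)) := by
  have : Nonempty (Fin n) := ⟨⟨0, hn⟩⟩
  obtain ⟨hpair, hchsh⟩ := hp
  obtain ⟨r, hr, htriangle⟩ := exists_alice_correlation (hpair 0) (hpair 1)
    (fun s t hst => hchsh s t hst 0 1 (by decide)) (fun s t hst => hchsh s t hst 1 0 (by decide))
  choose w hw using fun s => exists_tripleDist_nonneg hr (hpair 0 s) (hpair 1 s)
    (htriangle s).1 (htriangle s).2.1 (htriangle s).2.2.1 (htriangle s).2.2.2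
  set m := pairDist (p (.inl (aliceIdx n 0))) (p (.inl (aliceIdx n 1))) r
  set x : Fin n → Bool × Bool → Bool → ℝ := fun s => tripleDist (p (.inl (aliceIdx n 0)))
    (p (.inl (aliceIdx n 1))) (p (.inl (bobIdx n s))) r (p (.inr (0, s))) (p (.inr (1, s))) (w s)
  have hmx : ∀ s a, ∑ j, x s a j = m a := fun s a => sum_tripleDist ..
  have hfst := sum_condIndepCoupling_mul_fst hmx
  have hsnd := sum_condIndepCoupling_mul_fst_mul_apply hmx hw
  refine mem_convexHull_bell2nVertex_of_law (μ := condIndepCoupling m x)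
    (condIndepCoupling_nonneg (pairDist_nonneg hr) hw) ?_ ?_ ?_
    (fun s => ?_) (fun s => ?_) (fun s => ?_)
  · simpa [m, Fintype.sum_prod_type, pairDist] using hfst (fun _ => 1)
  · refine (hfst fun a => bv a.1).trans ?_
    simp [m, Fintype.sum_prod_type, pairDist, bv]
  · refine (hfst fun a => bv a.2).trans ?_
    simp [m, Fintype.sum_prod_type, pairDist, bv]
  · simpa [x, Fintype.sum_prod_type, tripleDist, bv] using hsnd (fun _ => 1) s bv
  · refine (hsnd (fun a => bv a.1) s bv).trans ?_
    simp [x, Fintype.sum_prod_type, tripleDist, bv]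
  · refine (hsnd (fun a => bv a.2) s bv).trans ?_
    simp [x, Fintype.sum_prod_type, tripleDist, bv]

/-- bipartite `(2,n)` Bell polytope, `n ≥ 2`: a vector lies in the
convex hull of the truth-table vertices iff it satisfies the trivial pair
inequalities for every Alice–Bob pair, together with all CHSH inequalities for every
pair of distinct Bob settings. -/
theorem mem_bell2n_polytope_iff (n : ℕ) (hn : 2 ≤ n)
    (p : (Fin (n + 2) ⊕ Fin 2 × Fin n) → ℝ) :
    p ∈ convexHull ℝ (Set.range (bell2nVertex n)) ↔
      ((∀ (i : Fin 2) (s : Fin n),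
          0 ≤ p (Sum.inr (i, s)) ∧
          p (Sum.inr (i, s)) ≤ p (Sum.inl (aliceIdx n i)) ∧
          p (Sum.inr (i, s)) ≤ p (Sum.inl (bobIdx n s)) ∧
          p (Sum.inl (aliceIdx n i)) + p (Sum.inl (bobIdx n s)) - p (Sum.inr (i, s)) ≤ 1) ∧
       (∀ s t : Fin n, s ≠ t → ∀ i j : Fin 2, i ≠ j →
          -1 ≤ p (Sum.inr (i, s)) + p (Sum.inr (i, t)) + p (Sum.inr (j, t))
                - p (Sum.inr (j, s)) - p (Sum.inl (aliceIdx n i)) - p (Sum.inl (bobIdx n t)) ∧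
          p (Sum.inr (i, s)) + p (Sum.inr (i, t)) + p (Sum.inr (j, t))
                - p (Sum.inr (j, s)) - p (Sum.inl (aliceIdx n i)) - p (Sum.inl (bobIdx n t)) ≤ 0)) :=
  ⟨fun hp => convexHull_min (range_subset_iff.2 (bell2nIneqs_bell2nVertex n))
      (convex_setOf_bell2nIneqs n) hp,
    mem_convexHull_of_bell2nIneqs (by omega)⟩
end

section
/- (Unconstrained extendability for three observables) For any p_1, p_2, p_3, p_{13}, p_{23} ∈ [0,1] satisfying 0 ≤ p_{is} ≤ min(p_i, p_3) and p_i + p_3 − p_{is} ≤ 1 for i = 1,2 (with p_{is} denoting p_{13}, p_{23}), there exists a value p_{12} ∈ [0,1] such that (p_1, p_2, p_3, p_{12}, p_{13}, p_{23}) lies in the Bell–Wigner polytope; i.e., any consistent pairwise data on the path graph 1–3–2 extends to a joint distribution on {0,1}^3. -/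
/-- Enumeration of the 8 vertices' sign patterns. -/
def bwEps : Fin 8 → Fin 3 → Bool :=
  ![![false,false,false], ![true,false,false], ![false,true,false], ![true,true,false],
    ![false,false,true], ![true,false,true], ![false,true,true], ![true,true,true]]

lemma v8_5_s19 {α : Type*} (a b c d e f g h : α) : ![a,b,c,d,e,f,g,h] 5 = f := rfl
lemma v8_6_s19 {α : Type*} (a b c d e f g h : α) : ![a,b,c,d,e,f,g,h] 6 = g := rfl
lemma v8_7_s19 {α : Type*} (a b c d e f g h : α) : ![a,b,c,d,e,f,g,h] 7 = h := rfl
lemma v6_4_s19 {α : Type*} (a b c d e f : α) : ![a,b,c,d,e,f] 4 = e := rfl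
lemma v6_5_s19 {α : Type*} (a b c d e f : α) : ![a,b,c,d,e,f] 5 = f := rfl

lemma mem_bw_of_weights (w : Fin 8 → ℝ) (x : Fin 6 → ℝ) (hw : ∀ i, 0 ≤ w i)
    (hs : 0 < ∑ i, w i)
    (heq : ∑ i, w i • bwVertex (bwEps i) = (∑ i, w i) • x) :
    x ∈ convexHull ℝ (Set.range bwVertex) := by
  have h := Finset.centerMass_mem_convexHull (Finset.univ : Finset (Fin 8))
    (fun i _ => hw i) (by simpa using hs)
    (fun i _ => Set.mem_range_self (f := bwVertex) (bwEps i))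
  have hx : Finset.univ.centerMass w (fun i => bwVertex (bwEps i)) = x := by
    rw [Finset.centerMass]
    rw [heq, smul_smul, inv_mul_cancel₀ (ne_of_gt hs), one_smul]
  rwa [hx] at h

lemma bw_eval : ∀ i : Fin 8, bwVertex (bwEps i) =
    ![![0,0,0,0,0,0], ![1,0,0,0,0,0], ![0,1,0,0,0,0], ![1,1,0,1,0,0],
      ![0,0,1,0,0,0], ![1,0,1,0,1,0], ![0,1,1,0,0,1], ![1,1,1,1,1,1]] i := by
  intro i
  fin_cases i <;> (funext j; fin_cases j) <;>
    first
    | rfl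
    | (show bv true * bv true = (1:ℝ); norm_num [bv])
    | (show bv true * bv false = (0:ℝ); norm_num [bv])
    | (show bv false * bv true = (0:ℝ); norm_num [bv])
    | (show bv false * bv false = (0:ℝ); norm_num [bv])

lemma sum_smul_bw (w : Fin 8 → ℝ) :
    ∑ i, w i • bwVertex (bwEps i) =
    ![w 1 + w 3 + w 5 + w 7, w 2 + w 3 + w 6 + w 7, w 4 + w 5 + w 6 + w 7,
      w 3 + w 7, w 5 + w 7, w 6 + w 7] := by
  simp only [bw_eval]
  funext j
  rw [Finset.sum_apply, Fin.sum_univ_eight]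
  fin_cases j
  · show w 0 * 0 + w 1 * 1 + w 2 * 0 + w 3 * 1 + w 4 * 0 + w 5 * 1 + w 6 * 0 + w 7 * 1
      = w 1 + w 3 + w 5 + w 7
    ring
  · show w 0 * 0 + w 1 * 0 + w 2 * 1 + w 3 * 1 + w 4 * 0 + w 5 * 0 + w 6 * 1 + w 7 * 1
      = w 2 + w 3 + w 6 + w 7
    ring
  · show w 0 * 0 + w 1 * 0 + w 2 * 0 + w 3 * 0 + w 4 * 1 + w 5 * 1 + w 6 * 1 + w 7 * 1
      = w 4 + w 5 + w 6 + w 7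
    ring
  · show w 0 * 0 + w 1 * 0 + w 2 * 0 + w 3 * 1 + w 4 * 0 + w 5 * 0 + w 6 * 0 + w 7 * 1
      = w 3 + w 7
    ring
  · show w 0 * 0 + w 1 * 0 + w 2 * 0 + w 3 * 0 + w 4 * 0 + w 5 * 1 + w 6 * 0 + w 7 * 1
      = w 5 + w 7
    ring
  · show w 0 * 0 + w 1 * 0 + w 2 * 0 + w 3 * 0 + w 4 * 0 + w 5 * 0 + w 6 * 1 + w 7 * 1
      = w 6 + w 7
    ring

set_option maxHeartbeats 1000000 in
/-- unconstrained extendability for three observables: any consistent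
pairwise data on the path graph `1–3–2` extends: if `p₁,p₂,p₃,p₁₃,p₂₃ ∈ [0,1]` satisfy
`0 ≤ p_{i3} ≤ min(p_i, p₃)` and `p_i + p₃ − p_{i3} ≤ 1` for `i = 1,2`, then there is a
value `p₁₂ ∈ [0,1]` with `(p₁,p₂,p₃,p₁₂,p₁₃,p₂₃)` in the Bell–Wigner polytope. -/
theorem path_graph_extends_to_bellWigner
    (p1 p2 p3 p13 p23 : ℝ)
    (h1 : 0 ≤ p1 ∧ p1 ≤ 1) (h2 : 0 ≤ p2 ∧ p2 ≤ 1) (h3 : 0 ≤ p3 ∧ p3 ≤ 1)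
    (h13 : 0 ≤ p13 ∧ p13 ≤ 1) (h23 : 0 ≤ p23 ∧ p23 ≤ 1)
    (hp13 : p13 ≤ p1 ∧ p13 ≤ p3 ∧ p1 + p3 - p13 ≤ 1)
    (hp23 : p23 ≤ p2 ∧ p23 ≤ p3 ∧ p2 + p3 - p23 ≤ 1) :
    ∃ p12 : ℝ, 0 ≤ p12 ∧ p12 ≤ 1 ∧
      ![p1, p2, p3, p12, p13, p23] ∈ convexHull ℝ (Set.range bwVertex) := by
  obtain ⟨h10, h11⟩ := h1
  obtain ⟨h20, h21⟩ := h2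
  obtain ⟨h30, h31⟩ := h3
  obtain ⟨h130, h131⟩ := h13
  obtain ⟨h230, h231⟩ := h23
  obtain ⟨h13a, h13b, h13c⟩ := hp13
  obtain ⟨h23a, h23b, h23c⟩ := hp23
  rcases eq_or_lt_of_le h30 with hz | hpos
  · -- p3 = 0
    have hp3 : p3 = 0 := hz.symm
    have e13 : p13 = 0 := le_antisymm (by linarith) h130
    have e23 : p23 = 0 := le_antisymm (by linarith) h230
    refine ⟨p1 * p2, mul_nonneg h10 h20, by nlinarith, ?_⟩
    apply mem_bw_of_weights
      ![(1-p1)*(1-p2), p1*(1-p2), (1-p1)*p2, p1*p2, 0, 0, 0, 0]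
    · intro i
      fin_cases i <;> simp [v8_5_s19, v8_6_s19, v8_7_s19] <;> nlinarith
    · simp [Fin.sum_univ_eight, v8_5_s19, v8_6_s19, v8_7_s19]; nlinarith
    · have hsum : (∑ i, (![(1-p1)*(1-p2), p1*(1-p2), (1-p1)*p2, p1*p2,
          (0:ℝ), 0, 0, 0]) i) = 1 := by
        simp [Fin.sum_univ_eight, v8_5_s19, v8_6_s19, v8_7_s19]; ring
      rw [hsum, one_smul, sum_smul_bw]
      funext j
      fin_cases j <;>
        simp [v8_5_s19, v8_6_s19, v8_7_s19, v6_4_s19, v6_5_s19, hp3, e13, e23] <;> ring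
  rcases eq_or_lt_of_le h31 with ho | hlt
  · -- p3 = 1
    have e13 : p13 = p1 := le_antisymm h13a (by linarith)
    have e23 : p23 = p2 := le_antisymm h23a (by linarith)
    refine ⟨p1 * p2, mul_nonneg h10 h20, by nlinarith, ?_⟩
    apply mem_bw_of_weights
      ![0, 0, 0, 0, (1-p1)*(1-p2), p1*(1-p2), (1-p1)*p2, p1*p2]
    · intro i
      fin_cases i <;> simp [v8_5_s19, v8_6_s19, v8_7_s19] <;> nlinarith
    · simp [Fin.sum_univ_eight, v8_5_s19, v8_6_s19, v8_7_s19]; nlinarith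
    · have hsum : (∑ i, (![(0:ℝ), 0, 0, 0, (1-p1)*(1-p2), p1*(1-p2),
          (1-p1)*p2, p1*p2]) i) = 1 := by
        simp [Fin.sum_univ_eight, v8_5_s19, v8_6_s19, v8_7_s19]; ring
      rw [hsum, one_smul, sum_smul_bw]
      funext j
      fin_cases j <;>
        simp [v8_5_s19, v8_6_s19, v8_7_s19, v6_4_s19, v6_5_s19, ho, e13, e23] <;> ring
  · -- 0 < p3 < 1
    have hq : (0:ℝ) < 1 - p3 := by linarith
    have hsne : p3 * (1 - p3) ≠ 0 := by positivity
    have hspos : (0:ℝ) < p3 * (1 - p3) := by positivity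
    set p12 : ℝ := (p13*p23*(1-p3) + (p1-p13)*(p2-p23)*p3) / (p3*(1-p3)) with hp12
    have hA0 : (0:ℝ) ≤ 1 - p3 - p1 + p13 := by linarith
    have hB0 : (0:ℝ) ≤ 1 - p3 - p2 + p23 := by linarith
    have hA1 : (0:ℝ) ≤ p1 - p13 := by linarith
    have hB1 : (0:ℝ) ≤ p2 - p23 := by linarith
    have hC1 : (0:ℝ) ≤ p3 - p13 := by linarith
    have hD1 : (0:ℝ) ≤ p3 - p23 := by linarith
    have hnum0 : (0:ℝ) ≤ p13*p23*(1-p3) + (p1-p13)*(p2-p23)*p3 := by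
      have := mul_nonneg (mul_nonneg h130 h230) hq.le
      have := mul_nonneg (mul_nonneg hA1 hB1) h30
      linarith
    refine ⟨p12, div_nonneg hnum0 hspos.le, ?_, ?_⟩
    · rw [hp12, div_le_one hspos]
      nlinarith [mul_nonneg (mul_nonneg hC1 h230) hq.le,
        mul_nonneg (mul_nonneg hA0 hB1) h30,
        mul_nonneg (mul_nonneg h30 hq.le) (show (0:ℝ) ≤ 1-p2 by linarith)]
    · have hsum : (∑ i, (![(1-p3-p1+p13)*(1-p3-p2+p23)*p3, (p1-p13)*(1-p3-p2+p23)*p3,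
            (1-p3-p1+p13)*(p2-p23)*p3, (p1-p13)*(p2-p23)*p3,
            (p3-p13)*(p3-p23)*(1-p3), p13*(p3-p23)*(1-p3),
            (p3-p13)*p23*(1-p3), p13*p23*(1-p3)]) i) = p3*(1-p3) := by
        simp [Fin.sum_univ_eight, v8_5_s19, v8_6_s19, v8_7_s19]; ring
      apply mem_bw_of_weights
        ![(1-p3-p1+p13)*(1-p3-p2+p23)*p3, (p1-p13)*(1-p3-p2+p23)*p3,
          (1-p3-p1+p13)*(p2-p23)*p3, (p1-p13)*(p2-p23)*p3,
          (p3-p13)*(p3-p23)*(1-p3), p13*(p3-p23)*(1-p3),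
          (p3-p13)*p23*(1-p3), p13*p23*(1-p3)]
      · intro i
        fin_cases i <;>
          first
          | exact mul_nonneg (mul_nonneg hA0 hB0) h30
          | exact mul_nonneg (mul_nonneg hA1 hB0) h30
          | exact mul_nonneg (mul_nonneg hA0 hB1) h30
          | exact mul_nonneg (mul_nonneg hA1 hB1) h30
          | exact mul_nonneg (mul_nonneg hC1 hD1) hq.le
          | exact mul_nonneg (mul_nonneg h130 hD1) hq.le
          | exact mul_nonneg (mul_nonneg hC1 h230) hq.le
          | exact mul_nonneg (mul_nonneg h130 h230) hq.le
      · rw [hsum]; exact hspos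
      · rw [hsum, sum_smul_bw]
        funext j
        fin_cases j <;>
          simp [v8_5_s19, v8_6_s19, v8_7_s19, v6_4_s19, v6_5_s19, hp12, Pi.smul_apply, smul_eq_mul] <;>
          (try field_simp) <;> ring
end
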